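/- arXiv:1905.10275 — 15 statements merged into one kernel-verified Lean document; each statement's English description precedes it below -/
import Mathlib

section
/- Let R be a commutative ring with identity, M a Noetherian R-module, and N a proper submodule of M. If N is a 2-irreducible submodule of M, then either N is an irreducible submodule of M, or there exist irreducible submodules N₁ and N₂ of M with N = N₁ ∩ N₂. -/
/-!
Since `M` is Noetherian, `N` is a finite intersection of irreducible submodules (the lattice
analogue of prime factorisation). Given such an intersection of at least three submodules, split
off two of them, `b` and `c`, and let `d` be the intersection of the rest: 2-irreducibility of
`N = b ⊓ c ⊓ d` says `N` is already the intersection of a proper subfamily. Repeating this leaves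
at most two irreducible submodules, and `N ≠ ⊤` excludes the empty family.
-/

def Is2Irreducible {R M : Type*} [CommRing R] [AddCommGroup M] [Module R M]
    (N : Submodule R M) : Prop :=
  ∀ H₁ H₂ H₃ : Submodule R M, N = H₁ ⊓ H₂ ⊓ H₃ →
    N = H₁ ⊓ H₂ ∨ N = H₁ ⊓ H₃ ∨ N = H₂ ⊓ H₃

def IsIrreducibleSubmodule {R M : Type*} [CommRing R] [AddCommGroup M] [Module R M]
    (N : Submodule R M) : Prop :=
  N ≠ ⊤ ∧ ∀ H₁ H₂ : Submodule R M, N = H₁ ⊓ H₂ → N = H₁ ∨ N = H₂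

section

variable {α : Type*} [SemilatticeInf α] [OrderTop α]

lemma Finset.inf_eq_inf_erase {ι : Type*} [DecidableEq ι] {s : Finset ι} {i : ι} (hi : i ∈ s)
    (f : ι → α) : s.inf f = f i ⊓ (s.erase i).inf f := by
  conv_lhs => rw [← Finset.insert_erase hi]
  exact Finset.inf_insert

theorem exists_subset_card_le_two_inf_eq {a : α}
    (h2 : ∀ b c d : α, a = b ⊓ c ⊓ d → a = b ⊓ c ∨ a = b ⊓ d ∨ a = c ⊓ d)
    (s : Finset α) (hs : s.inf id = a) : ∃ t ⊆ s, t.card ≤ 2 ∧ t.inf id = a := by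
  classical
  induction s using Finset.strongInduction with
  | H s ih =>
  by_cases hcard : s.card ≤ 2
  · exact ⟨s, subset_rfl, hcard, hs⟩
  obtain ⟨b, hb, c, hc, -, -, hbc, -, -⟩ := Finset.two_lt_card.1 (not_le.1 hcard)
  have hcb : c ∈ s.erase b := Finset.mem_erase.2 ⟨hbc.symm, hc⟩
  have hbc' : b ∈ s.erase c := Finset.mem_erase.2 ⟨hbc, hb⟩
  set d := ((s.erase b).erase c).inf id
  have hsb : (s.erase b).inf id = c ⊓ d := Finset.inf_eq_inf_erase hcb id
  have hsc : (s.erase c).inf id = b ⊓ d := by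
    rw [Finset.inf_eq_inf_erase hbc' id, Finset.erase_right_comm, id_eq]
  rcases h2 b c d (by rw [← hs, Finset.inf_eq_inf_erase hb id, hsb, inf_assoc, id_eq])
    with h | h | h
  · refine ⟨{b, c}, ?_, Finset.card_le_two, by simp [h]⟩
    exact Finset.insert_subset hb (Finset.singleton_subset_iff.2 hc)
  · obtain ⟨t, hts, ht⟩ := ih _ (Finset.erase_ssubset hc) (hsc.trans h.symm)
    exact ⟨t, hts.trans (Finset.erase_subset _ _), ht⟩
  · obtain ⟨t, hts, ht⟩ := ih _ (Finset.erase_ssubset hb) (hsb.trans h.symm)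
    exact ⟨t, hts.trans (Finset.erase_subset _ _), ht⟩

theorem infIrred_or_exists_infIrred_inf_eq [WellFoundedGT α] {a : α} (ha : a ≠ ⊤)
    (h2 : ∀ b c d : α, a = b ⊓ c ⊓ d → a = b ⊓ c ∨ a = b ⊓ d ∨ a = c ⊓ d) :
    InfIrred a ∨ ∃ b c, InfIrred b ∧ InfIrred c ∧ a = b ⊓ c := by
  classical
  obtain ⟨s, hs, hirr⟩ := exists_infIrred_decomposition a
  obtain ⟨t, hts, hcard, ht⟩ := exists_subset_card_le_two_inf_eq h2 s hs
  interval_cases hc : t.card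
  · exact absurd (by simpa [Finset.card_eq_zero.1 hc] using ht.symm) ha
  · obtain ⟨b, rfl⟩ := Finset.card_eq_one.1 hc
    left
    simpa [← ht] using hirr (hts (Finset.mem_singleton_self b))
  · obtain ⟨b, c, -, rfl⟩ := Finset.card_eq_two.1 hc
    exact Or.inr ⟨b, c, hirr (hts (by simp)), hirr (hts (by simp)), by simpa using ht.symm⟩

end

theorem isIrreducibleSubmodule_iff_infIrred {R M : Type*} [CommRing R] [AddCommGroup M]
    [Module R M] (N : Submodule R M) : IsIrreducibleSubmodule N ↔ InfIrred N := by
  rw [IsIrreducibleSubmodule, InfIrred, isMax_iff_eq_top]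
  refine and_congr_right fun _ ↦ ⟨fun h H₁ H₂ hN ↦ ?_, fun h H₁ H₂ hN ↦ ?_⟩
  · exact (h H₁ H₂ hN.symm).imp Eq.symm Eq.symm
  · exact (h hN.symm).imp Eq.symm Eq.symm

theorem stmt_0 {R M : Type*} [CommRing R] [AddCommGroup M] [Module R M]
    [IsNoetherian R M] (N : Submodule R M) (hN : N ≠ ⊤)
    (h2 : Is2Irreducible N) :
    IsIrreducibleSubmodule N ∨
      ∃ N₁ N₂ : Submodule R M, IsIrreducibleSubmodule N₁ ∧
        IsIrreducibleSubmodule N₂ ∧ N = N₁ ⊓ N₂ := by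
  simp only [isIrreducibleSubmodule_iff_infIrred]
  exact infIrred_or_exists_infIrred_inf_eq hN h2
end

section
/- Let R be a commutative ring with identity and M a Noetherian multiplication R-module. If N is a proper 2-irreducible submodule of M, then N is a 2-absorbing primary submodule of M. -/
def IsMultiplicationModule (R M : Type*) [CommRing R] [AddCommGroup M] [Module R M] : Prop :=
  ∀ N : Submodule R M, ∃ I : Ideal R, N = I • (⊤ : Submodule R M)

def IsPrimeSubmodule {R M : Type*} [CommRing R] [AddCommGroup M] [Module R M]
    (P : Submodule R M) : Prop :=
  P ≠ ⊤ ∧ ∀ (r : R) (m : M), r • m ∈ P → m ∈ P ∨ r ∈ P.colon ⊤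

def radSubmodule {R M : Type*} [CommRing R] [AddCommGroup M] [Module R M]
    (N : Submodule R M) : Submodule R M :=
  sInf {P : Submodule R M | IsPrimeSubmodule P ∧ N ≤ P}

def Is2AbsorbingPrimary {R M : Type*} [CommRing R] [AddCommGroup M] [Module R M]
    (N : Submodule R M) : Prop :=
  N ≠ ⊤ ∧ ∀ (a b : R) (m : M), (a * b) • m ∈ N →
    a • m ∈ radSubmodule N ∨ b • m ∈ radSubmodule N ∨ a * b ∈ N.colon ⊤

section Aux

variable {R M : Type*} [CommRing R] [AddCommGroup M] [Module R M]

/-- A submodule is (inf-)irreducible. -/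
def IrrSub (Q : Submodule R M) : Prop :=
  ∀ H₁ H₂ : Submodule R M, Q = H₁ ⊓ H₂ → Q = H₁ ∨ Q = H₂

/-- Stabilization of the chain `Q :ₘ c^i` in a Noetherian module. -/
lemma aux_stab [IsNoetherian R M] (Q : Submodule R M) (c : R) :
    ∃ n : ℕ, 1 ≤ n ∧ ∀ k, n ≤ k → ∀ i, k ≤ i → ∀ x : M, c ^ i • x ∈ Q → c ^ k • x ∈ Q := by
  have hmono : Monotone (fun i : ℕ => Q.comap ((LinearMap.lsmul R M) (c ^ i))) := by
    intro i j hij x hx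
    obtain ⟨d, rfl⟩ := Nat.exists_eq_add_of_le hij
    simp only [Submodule.mem_comap, LinearMap.lsmul_apply] at *
    rw [pow_add, mul_comm, mul_smul]
    exact Q.smul_mem _ hx
  obtain ⟨n0, hn0⟩ := (monotone_stabilizes_iff_noetherian.mpr inferInstance)
    ⟨fun i : ℕ => Q.comap ((LinearMap.lsmul R M) (c ^ i)), hmono⟩
  refine ⟨n0 + 1, le_add_self, ?_⟩
  intro k hk i hi x hx
  have h1 : Q.comap ((LinearMap.lsmul R M) (c ^ i)) = Q.comap ((LinearMap.lsmul R M) (c ^ n0)) :=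
    (hn0 i (le_trans (Nat.le_add_right n0 1) (le_trans hk hi))).symm
  have h2 : Q.comap ((LinearMap.lsmul R M) (c ^ n0)) = Q.comap ((LinearMap.lsmul R M) (c ^ k)) :=
    hn0 k (le_trans (Nat.le_add_right n0 1) hk)
  have hx' : x ∈ Q.comap ((LinearMap.lsmul R M) (c ^ i)) := by
    simpa [Submodule.mem_comap, LinearMap.lsmul_apply] using hx
  rw [h1, h2] at hx'
  simpa [Submodule.mem_comap, LinearMap.lsmul_apply] using hx'

/-- An irreducible submodule of a Noetherian module is primary. -/
lemma aux_primary [IsNoetherian R M] {Q : Submodule R M} (hQ : IrrSub Q)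
    (r : R) (x : M) (hrx : r • x ∈ Q) :
    x ∈ Q ∨ ∃ n : ℕ, ∀ y : M, r ^ n • y ∈ Q := by
  by_cases hx : x ∈ Q
  · exact Or.inl hx
  right
  obtain ⟨n, hn1, hstab⟩ := aux_stab Q r
  refine ⟨n, ?_⟩
  have hdec : Q = (Q ⊔ LinearMap.range ((LinearMap.lsmul R M) (r ^ n))) ⊓
      (Q ⊔ Submodule.span R {x}) := by
    apply le_antisymm
    · exact le_inf le_sup_left le_sup_left
    · rintro z ⟨hz1, hz2⟩
      obtain ⟨y1, hy1, w1, hw1, hzeq1⟩ := Submodule.mem_sup.mp hz1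
      obtain ⟨u, hu⟩ := hw1
      obtain ⟨y2, hy2, w2, hw2, hzeq2⟩ := Submodule.mem_sup.mp hz2
      obtain ⟨t, ht⟩ := Submodule.mem_span_singleton.mp hw2
      simp only [LinearMap.lsmul_apply] at hu
      -- r • z ∈ Q
      have hrz : r • z ∈ Q := by
        have : r • z = r • y2 + t • (r • x) := by
          rw [← hzeq2, smul_add, ← ht, smul_comm t r x, ← smul_assoc, smul_eq_mul,
            mul_comm, ← smul_eq_mul, smul_assoc]
        rw [this]
        exact Q.add_mem (Q.smul_mem r hy2) (Q.smul_mem t hrx)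
      have hru : r ^ (n + 1) • u ∈ Q := by
        have e : r ^ (n + 1) • u = r • z - r • y1 := by
          rw [← hzeq1, ← hu, smul_add, pow_succ, mul_comm, mul_smul]
          abel
        rw [e]
        exact Q.sub_mem hrz (Q.smul_mem r hy1)
      have hru' : r ^ n • u ∈ Q := hstab n le_rfl (n + 1) (Nat.le_succ n) u hru
      have e2 : z = y1 + r ^ n • u := by rw [hu]; exact hzeq1.symm
      rw [e2]
      exact Q.add_mem hy1 hru'
  rcases hQ _ _ hdec with hA | hB
  · intro y
    have hy : r ^ n • y ∈ Q ⊔ LinearMap.range ((LinearMap.lsmul R M) (r ^ n)) :=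
      Submodule.mem_sup_right ⟨y, by simp [LinearMap.lsmul_apply]⟩
    rw [← hA] at hy
    exact hy
  · exfalso
    apply hx
    have : x ∈ Q ⊔ Submodule.span R {x} :=
      Submodule.mem_sup_right (Submodule.mem_span_singleton_self x)
    rw [← hB] at this
    exact this

/-- If `c^n • x` lies in a prime submodule, then so does `c • x`. -/
lemma aux_pow_prime {P : Submodule R M} (hP : IsPrimeSubmodule P) (c : R) (x : M) :
    ∀ n : ℕ, c ^ n • x ∈ P → c • x ∈ P := by
  intro n
  induction n with
  | zero => intro h; exact P.smul_mem c (by simpa using h)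
  | succ n ih =>
    intro h
    rw [pow_succ, mul_comm, mul_smul] at h
    rcases hP.2 c (c ^ n • x) h with h' | h'
    · exact ih h'
    · exact Submodule.mem_colon.mp h' x (Submodule.mem_top (R := R))

/-- Trichotomy for an irreducible submodule in a Noetherian module. -/
lemma aux_trich [IsNoetherian R M] {Q : Submodule R M} (hQ : IrrSub Q)
    (a b : R) (m : M) (h : (a * b) • m ∈ Q) :
    a • m ∈ radSubmodule Q ∨ b • m ∈ radSubmodule Q := by
  obtain ⟨n1, hn11, hs1⟩ := aux_stab Q (a * b)
  obtain ⟨n2, hn21, hs2⟩ := aux_stab Q b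
  set k := max n1 n2 with hk
  have hk1 : 1 ≤ k := le_trans hn11 (le_max_left _ _)
  have hstab_ab : ∀ x : M, (a * b) ^ (2 * k) • x ∈ Q → (a * b) ^ k • x ∈ Q :=
    fun x hx => hs1 k (le_max_left _ _) (2 * k) (by omega) x hx
  have hstab_b : ∀ x : M, b ^ (2 * k) • x ∈ Q → b ^ k • x ∈ Q :=
    fun x hx => hs2 k (le_max_right _ _) (2 * k) (by omega) x hx
  set A := Q ⊔ LinearMap.range ((LinearMap.lsmul R M) (a ^ k)) with hA
  set B := Q ⊔ LinearMap.range ((LinearMap.lsmul R M) (b ^ k)) with hB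
  set C := Q.comap ((LinearMap.lsmul R M) ((a * b) ^ k)) with hC
  have hdec : Q = C ⊓ (A ⊓ B) := by
    apply le_antisymm
    · refine le_inf ?_ (le_inf le_sup_left le_sup_left)
      intro x hx
      simp only [hC, Submodule.mem_comap, LinearMap.lsmul_apply]
      exact Q.smul_mem _ hx
    · rintro z ⟨hzC, hzA, hzB⟩
      simp only [hC, Submodule.mem_comap, LinearMap.lsmul_apply] at hzC
      obtain ⟨y1, hy1, w1, hw1, hzeq1⟩ := Submodule.mem_sup.mp hzA
      obtain ⟨u, hu⟩ := hw1
      simp only [LinearMap.lsmul_apply] at hu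
      obtain ⟨y2, hy2, w2, hw2, hzeq2⟩ := Submodule.mem_sup.mp hzB
      obtain ⟨v, hv⟩ := hw2
      simp only [LinearMap.lsmul_apply] at hv
      -- (a*b)^k • (a^k • u) ∈ Q
      have h1 : (a * b) ^ k • (a ^ k • u) ∈ Q := by
        have e : (a * b) ^ k • (a ^ k • u) = (a * b) ^ k • z - (a * b) ^ k • y1 := by
          rw [← hzeq1, ← hu, smul_add]; abel
        rw [e]
        exact Q.sub_mem hzC (Q.smul_mem _ hy1)
      have h2 : (a * b) ^ (2 * k) • u ∈ Q := by
        have e : (a * b) ^ (2 * k) • u = b ^ k • ((a * b) ^ k • (a ^ k • u)) := by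
          rw [smul_smul, smul_smul]
          congr 1
          ring
        rw [e]
        exact Q.smul_mem _ h1
      have h3 : (a * b) ^ k • u ∈ Q := hstab_ab u h2
      -- b^(2k) • v ∈ Q
      have h4 : b ^ (2 * k) • v ∈ Q := by
        have heq12 : y1 + a ^ k • u = y2 + b ^ k • v := by
          rw [hu, hv, hzeq1, hzeq2]
        have hsub : a ^ k • u - b ^ k • v = y2 - y1 := by
          have e : a ^ k • u - b ^ k • v = (y1 + a ^ k • u) - y1 - b ^ k • v := by abel
          rw [e, heq12]; abel
        have hbk : b ^ k • (a ^ k • u - b ^ k • v) ∈ Q := by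
          rw [hsub]
          exact Q.smul_mem _ (Q.sub_mem hy2 hy1)
        have hba : b ^ k • (a ^ k • u) ∈ Q := by
          have e : b ^ k • (a ^ k • u) = (a * b) ^ k • u := by
            rw [smul_smul]; congr 1; rw [mul_pow]; ring
          rw [e]; exact h3
        have : b ^ k • (b ^ k • v) ∈ Q := by
          have e : b ^ k • (b ^ k • v) = b ^ k • (a ^ k • u) - b ^ k • (a ^ k • u - b ^ k • v) := by
            rw [smul_sub]; abel
          rw [e]
          exact Q.sub_mem hba hbk
        have e : b ^ (2 * k) • v = b ^ k • (b ^ k • v) := by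
          rw [smul_smul]; congr 1; rw [two_mul, pow_add]
        rw [e]; exact this
      have h5 : b ^ k • v ∈ Q := hstab_b v h4
      have e2 : z = y2 + b ^ k • v := by rw [hv]; exact hzeq2.symm
      rw [e2]
      exact Q.add_mem hy2 h5
  rcases hQ _ _ hdec with hQC | hQAB
  · -- m ∈ Q
    have hmC : m ∈ C := by
      simp only [hC, Submodule.mem_comap, LinearMap.lsmul_apply]
      obtain ⟨d, hd⟩ := Nat.exists_eq_add_of_le hk1
      rw [hd, pow_add, pow_one, mul_comm, mul_smul]
      exact Q.smul_mem _ h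
    have hmQ : m ∈ Q := by rw [hQC]; exact hmC
    left
    refine Submodule.mem_sInf.mpr fun P hP => hP.2 (Q.smul_mem a hmQ)
  rcases hQ _ _ hQAB with hQA | hQB
  · left
    have hak : ∀ y : M, a ^ k • y ∈ Q := by
      intro y
      have : a ^ k • y ∈ A := Submodule.mem_sup_right ⟨y, by simp [LinearMap.lsmul_apply]⟩
      rw [← hQA] at this
      exact this
    refine Submodule.mem_sInf.mpr fun P hP => aux_pow_prime hP.1 a m k (hP.2 (hak m))
  · right
    have hbk : ∀ y : M, b ^ k • y ∈ Q := by
      intro y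
      have : b ^ k • y ∈ B := Submodule.mem_sup_right ⟨y, by simp [LinearMap.lsmul_apply]⟩
      rw [← hQB] at this
      exact this
    refine Submodule.mem_sInf.mpr fun P hP => aux_pow_prime hP.1 b m k (hP.2 (hbk m))

/-- In a multiplication module, a prime submodule containing an intersection
contains one of the factors. -/
lemma aux_dich (hmul : IsMultiplicationModule R M) {P : Submodule R M}
    (hP : IsPrimeSubmodule P) {Q1 Q2 : Submodule R M} (hle : Q1 ⊓ Q2 ≤ P) :
    Q1 ≤ P ∨ Q2 ≤ P := by
  by_cases h1 : Q1 ≤ P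
  · exact Or.inl h1
  right
  obtain ⟨x1, hx1Q, hx1P⟩ := SetLike.not_le_iff_exists.mp h1
  obtain ⟨I, hI⟩ := hmul Q1
  have hex : ∃ i ∈ I, ∃ y0 : M, i • y0 ∉ P := by
    by_contra hc
    push_neg at hc
    have hQ1P : Q1 ≤ P := by
      rw [hI]
      exact Submodule.smul_le.mpr fun r hr n _ => hc r hr n
    exact hx1P (hQ1P hx1Q)
  obtain ⟨i, hiI, y0, hy0⟩ := hex
  intro y hy
  have hiy : i • y ∈ P := by
    refine hle ⟨?_, Q2.smul_mem i hy⟩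
    rw [hI]
    exact Submodule.smul_mem_smul hiI Submodule.mem_top
  rcases hP.2 i y hiy with h | h
  · exact h
  · exact absurd (Submodule.mem_colon.mp h y0 (Submodule.mem_top (R := R))) hy0

/-- Key lemma: if `Q` is irreducible (hence primary), `P` is a prime submodule
containing `Q`, `m ∉ P` and `r • m ∈ Q`, then `r • y ∈ Q` for all `y`. -/
lemma aux_L [IsNoetherian R M] (hmul : IsMultiplicationModule R M)
    {Q P : Submodule R M} (hQ : IrrSub Q) (hP : IsPrimeSubmodule P) (hQP : Q ≤ P)
    {m : M} (hm : m ∉ P) {r : R} (hrm : r • m ∈ Q) : ∀ y : M, r • y ∈ Q := by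
  obtain ⟨J, hJ⟩ := hmul (Submodule.span R {m})
  have hex : ∃ j ∈ J, ∃ y0 : M, j • y0 ∉ P := by
    by_contra hc
    push_neg at hc
    have hmP : Submodule.span R {m} ≤ P := by
      rw [hJ]
      exact Submodule.smul_le.mpr fun r' hr' n _ => hc r' hr' n
    exact hm (hmP (Submodule.mem_span_singleton_self m))
  obtain ⟨j, hjJ, y0, hy0⟩ := hex
  intro y
  have hjy : j • y ∈ Submodule.span R {m} := by
    rw [hJ]
    exact Submodule.smul_mem_smul hjJ Submodule.mem_top
  obtain ⟨t, ht⟩ := Submodule.mem_span_singleton.mp hjy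
  have hjr : j • (r • y) ∈ Q := by
    have e : j • (r • y) = t • (r • m) := by
      rw [smul_comm j r y, ← ht, smul_smul, smul_smul, mul_comm]
    rw [e]
    exact Q.smul_mem t hrm
  rcases aux_primary hQ j (r • y) hjr with h | ⟨n, hn⟩
  · exact h
  · exfalso
    exact hy0 (aux_pow_prime hP j y0 n (hQP (hn y0)))

lemma aux_foldr (l1 l2 : List (Submodule R M)) :
    (l1 ++ l2).foldr (· ⊓ ·) ⊤ = l1.foldr (· ⊓ ·) ⊤ ⊓ l2.foldr (· ⊓ ·) ⊤ := by
  induction l1 with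
  | nil => simp
  | cons a l ih => simp [ih, inf_assoc]

/-- Every submodule of a Noetherian module is a finite intersection of
irreducible submodules. -/
lemma aux_decomp [IsNoetherian R M] (N : Submodule R M) :
    ∃ l : List (Submodule R M), (∀ Q ∈ l, IrrSub Q) ∧ N = l.foldr (· ⊓ ·) ⊤ := by
  have wf : WellFounded ((· > ·) : Submodule R M → Submodule R M → Prop) := IsWellFounded.wf
  induction N using wf.induction with
  | _ N ih =>
    by_cases hN : IrrSub N
    · exact ⟨[N], by simp [hN], by simp⟩
    · unfold IrrSub at hN
      push_neg at hN
      obtain ⟨H1, H2, heq, hne1, hne2⟩ := hN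
      have hgt1 : H1 > N := lt_of_le_of_ne (heq ▸ inf_le_left) hne1
      have hgt2 : H2 > N := lt_of_le_of_ne (heq ▸ inf_le_right) hne2
      obtain ⟨l1, hl1, hfold1⟩ := ih H1 hgt1
      obtain ⟨l2, hl2, hfold2⟩ := ih H2 hgt2
      refine ⟨l1 ++ l2, ?_, ?_⟩
      · intro Q hQ
        rcases List.mem_append.mp hQ with h | h
        · exact hl1 Q h
        · exact hl2 Q h
      · rw [aux_foldr, ← hfold1, ← hfold2]
        exact heq

/-- Using 2-irreducibility, a finite irreducible decomposition reduces to two terms. -/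
lemma aux_reduce {N : Submodule R M} (h2 : Is2Irreducible N) :
    ∀ l : List (Submodule R M), (∀ Q ∈ l, IrrSub Q) →
      ∀ Q : Submodule R M, IrrSub Q → N = Q ⊓ l.foldr (· ⊓ ·) ⊤ →
        ∃ Q1 Q2 : Submodule R M, IrrSub Q1 ∧ IrrSub Q2 ∧ N = Q1 ⊓ Q2 := by
  intro l
  induction l with
  | nil =>
    intro _ Q hQ h
    simp only [List.foldr_nil, inf_top_eq] at h
    exact ⟨Q, Q, hQ, hQ, by rw [h, inf_idem]⟩
  | cons Q' l' ih =>
    intro hl Q hQ h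
    have hQ' : IrrSub Q' := hl Q' List.mem_cons_self
    have hl' : ∀ x ∈ l', IrrSub x := fun x hx => hl x (List.mem_cons_of_mem _ hx)
    have h3 : N = Q ⊓ Q' ⊓ l'.foldr (· ⊓ ·) ⊤ := by
      rw [h]
      simp only [List.foldr_cons]
      rw [inf_assoc]
    rcases h2 _ _ _ h3 with h12 | h13 | h23
    · exact ⟨Q, Q', hQ, hQ', h12⟩
    · exact ih hl' Q hQ h13
    · exact ih hl' Q' hQ' h23

end Aux

theorem stmt_1 {R M : Type*} [CommRing R] [AddCommGroup M] [Module R M]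
    [IsNoetherian R M] (hmul : IsMultiplicationModule R M)
    (N : Submodule R M) (hN : N ≠ ⊤) (h2 : Is2Irreducible N) :
    Is2AbsorbingPrimary N := by
  refine ⟨hN, ?_⟩
  intro a b m habm
  by_cases ha : a • m ∈ radSubmodule N
  · exact Or.inl ha
  by_cases hb : b • m ∈ radSubmodule N
  · exact Or.inr (Or.inl hb)
  refine Or.inr (Or.inr ?_)
  -- extract primes witnessing failure
  have hPa : ∃ P : Submodule R M, (IsPrimeSubmodule P ∧ N ≤ P) ∧ a • m ∉ P := by
    by_contra hc
    push_neg at hc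
    exact ha (Submodule.mem_sInf.mpr fun P hP => hc P ⟨hP.1, hP.2⟩)
  have hPb : ∃ P : Submodule R M, (IsPrimeSubmodule P ∧ N ≤ P) ∧ b • m ∉ P := by
    by_contra hc
    push_neg at hc
    exact hb (Submodule.mem_sInf.mpr fun P hP => hc P ⟨hP.1, hP.2⟩)
  obtain ⟨P, ⟨hPprime, hNP⟩, hamP⟩ := hPa
  obtain ⟨P', ⟨hP'prime, hNP'⟩, hbmP'⟩ := hPb
  -- decompose N into two irreducibles
  obtain ⟨l, hl, hfold⟩ := aux_decomp N
  obtain ⟨Q1, Q2, hQ1, hQ2, hN12⟩ :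
      ∃ Q1 Q2 : Submodule R M, IrrSub Q1 ∧ IrrSub Q2 ∧ N = Q1 ⊓ Q2 := by
    cases l with
    | nil =>
      simp only [List.foldr_nil] at hfold
      exact absurd hfold hN
    | cons Q rest =>
      refine aux_reduce h2 rest (fun x hx => hl x (List.mem_cons_of_mem _ hx))
        Q (hl Q List.mem_cons_self) ?_
      simpa using hfold
  have habm1 : (a * b) • m ∈ Q1 := by
    rw [hN12] at habm; exact habm.1
  have habm2 : (a * b) • m ∈ Q2 := by
    rw [hN12] at habm; exact habm.2
  have hmP : m ∉ P := fun h => hamP (P.smul_mem a h)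
  have hmP' : m ∉ P' := fun h => hbmP' (P'.smul_mem b h)
  have hleP : Q1 ⊓ Q2 ≤ P := by rw [← hN12]; exact hNP
  have hleP' : Q1 ⊓ Q2 ≤ P' := by rw [← hN12]; exact hNP'
  have key : (∀ y : M, (a * b) • y ∈ Q1) ∧ (∀ y : M, (a * b) • y ∈ Q2) := by
    rcases aux_dich hmul hPprime hleP with hP1 | hP2 <;>
      rcases aux_dich hmul hP'prime hleP' with hP1' | hP2'
    · -- Q1 ≤ P and Q1 ≤ P' : contradiction via trichotomy
      exfalso
      rcases aux_trich hQ1 a b m habm1 with hr | hr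
      · exact hamP (Submodule.mem_sInf.mp hr P ⟨hPprime, hP1⟩)
      · exact hbmP' (Submodule.mem_sInf.mp hr P' ⟨hP'prime, hP1'⟩)
    · -- Q1 ≤ P and Q2 ≤ P'
      exact ⟨aux_L hmul hQ1 hPprime hP1 hmP habm1,
        aux_L hmul hQ2 hP'prime hP2' hmP' habm2⟩
    · -- Q2 ≤ P and Q1 ≤ P'
      exact ⟨aux_L hmul hQ1 hP'prime hP1' hmP' habm1,
        aux_L hmul hQ2 hPprime hP2 hmP habm2⟩
    · -- Q2 ≤ P and Q2 ≤ P' : contradiction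
      exfalso
      rcases aux_trich hQ2 a b m habm2 with hr | hr
      · exact hamP (Submodule.mem_sInf.mp hr P ⟨hPprime, hP2⟩)
      · exact hbmP' (Submodule.mem_sInf.mp hr P' ⟨hP'prime, hP2'⟩)
  refine Submodule.mem_colon.mpr fun p _ => ?_
  rw [hN12]
  exact ⟨key.1 p, key.2 p⟩
end

section
/- Let R be a commutative ring with identity and M a distributive R-module. A proper submodule N of M is strongly 2-irreducible if and only if N is 2-irreducible. -/
def IsStrongly2Irreducible {R M : Type*} [CommRing R] [AddCommGroup M] [Module R M]
    (N : Submodule R M) : Prop :=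
  N ≠ ⊤ ∧ ∀ H₁ H₂ H₃ : Submodule R M, H₁ ⊓ H₂ ⊓ H₃ ≤ N →
    H₁ ⊓ H₂ ≤ N ∨ H₁ ⊓ H₃ ≤ N ∨ H₂ ⊓ H₃ ≤ N

def IsDistributiveModule (R M : Type*) [CommRing R] [AddCommGroup M] [Module R M] : Prop :=
  ∀ A B C : Submodule R M, A ⊓ (B ⊔ C) = A ⊓ B ⊔ A ⊓ C

/-! In a distributive lattice `H ↦ H ⊔ N` preserves meets, so an inclusion `H₁ ⊓ H₂ ⊓ H₃ ≤ N`
becomes the equation `N = (H₁ ⊔ N) ⊓ (H₂ ⊔ N) ⊓ (H₃ ⊔ N)`, to which 2-irreducibility applies;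
and `(Hᵢ ⊔ N) ⊓ (Hⱼ ⊔ N) = N` means exactly `Hᵢ ⊓ Hⱼ ≤ N`. -/

theorem sup_inf_sup_eq_right_iff {α : Type*} [DistribLattice α] {a b n : α} :
    (a ⊔ n) ⊓ (b ⊔ n) = n ↔ a ⊓ b ≤ n := by
  rw [← sup_inf_right, sup_eq_right]

abbrev IsDistributiveModule.distribLattice {R M : Type*} [CommRing R] [AddCommGroup M]
    [Module R M] (h : IsDistributiveModule R M) : DistribLattice (Submodule R M) :=
  DistribLattice.ofInfSupLe fun A B C => (h A B C).le

section

variable {R M : Type*} [CommRing R] [AddCommGroup M] [Module R M] {N : Submodule R M}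

theorem IsStrongly2Irreducible.is2Irreducible (h : IsStrongly2Irreducible N) :
    Is2Irreducible N := by
  intro H₁ H₂ H₃ hN
  have h₁₂ : N ≤ H₁ ⊓ H₂ := hN.le.trans inf_le_left
  have h₁₃ : N ≤ H₁ ⊓ H₃ := hN.le.trans (inf_le_inf_right _ inf_le_left)
  have h₂₃ : N ≤ H₂ ⊓ H₃ := hN.le.trans (inf_le_inf_right _ inf_le_right)
  rcases h.2 H₁ H₂ H₃ hN.ge with h | h | h
  exacts [.inl (h₁₂.antisymm h), .inr (.inl (h₁₃.antisymm h)), .inr (.inr (h₂₃.antisymm h))]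

theorem Is2Irreducible.isStrongly2Irreducible (hdist : IsDistributiveModule R M) (hN : N ≠ ⊤)
    (h : Is2Irreducible N) : IsStrongly2Irreducible N := by
  let := hdist.distribLattice
  refine ⟨hN, fun H₁ H₂ H₃ hle => ?_⟩
  have hsup : N = (H₁ ⊔ N) ⊓ (H₂ ⊔ N) ⊓ (H₃ ⊔ N) := by
    rw [← sup_inf_right, ← sup_inf_right, sup_eq_right.2 hle]
  simpa only [eq_comm (a := N), sup_inf_sup_eq_right_iff] using h _ _ _ hsup

end

theorem stmt_2 {R M : Type*} [CommRing R] [AddCommGroup M] [Module R M]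
    (hdist : IsDistributiveModule R M) (N : Submodule R M) (hN : N ≠ ⊤) :
    IsStrongly2Irreducible N ↔ Is2Irreducible N :=
  ⟨IsStrongly2Irreducible.is2Irreducible, Is2Irreducible.isStrongly2Irreducible hdist hN⟩
end

section
/- Let R be a commutative ring with identity, M an R-module, and N a proper submodule of M. Then N is a strongly 2-irreducible submodule of M if and only if for all elements x, y, z of M, (Rx + Ry) ∩ (Rx + Rz) ∩ (Ry + Rz) ⊆ N implies that (Rx + Ry) ∩ (Rx + Rz) ⊆ N or (Rx + Ry) ∩ (Ry + Rz) ⊆ N or (Rx + Rz) ∩ (Ry + Rz) ⊆ N. -/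
namespace Submodule

variable {R M : Type*} [CommRing R] [AddCommGroup M] [Module R M]

theorem span_singleton_sup_span_singleton_le {H : Submodule R M} {x y : M}
    (hx : x ∈ H) (hy : y ∈ H) : (R ∙ x) ⊔ (R ∙ y) ≤ H :=
  sup_le ((span_singleton_le_iff_mem x H).2 hx) ((span_singleton_le_iff_mem y H).2 hy)

theorem mem_span_singleton_sup_left (x y : M) : x ∈ (R ∙ x) ⊔ (R ∙ y) :=
  mem_sup_left (mem_span_singleton_self x)

theorem mem_span_singleton_sup_right (x y : M) : y ∈ (R ∙ x) ⊔ (R ∙ y) :=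
  mem_sup_right (mem_span_singleton_self y)

theorem isStrongly2Irreducible_of_span_singleton_sup {N : Submodule R M} (hN : N ≠ ⊤)
    (h : ∀ x y z : M,
      ((R ∙ x) ⊔ (R ∙ y)) ⊓ ((R ∙ x) ⊔ (R ∙ z)) ⊓ ((R ∙ y) ⊔ (R ∙ z)) ≤ N →
        ((R ∙ x) ⊔ (R ∙ y)) ⊓ ((R ∙ x) ⊔ (R ∙ z)) ≤ N ∨
        ((R ∙ x) ⊔ (R ∙ y)) ⊓ ((R ∙ y) ⊔ (R ∙ z)) ≤ N ∨
        ((R ∙ x) ⊔ (R ∙ z)) ⊓ ((R ∙ y) ⊔ (R ∙ z)) ≤ N) :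
    IsStrongly2Irreducible N := by
  refine ⟨hN, fun H₁ H₂ H₃ hle => ?_⟩
  by_contra! hc
  simp only [SetLike.not_le_iff_exists] at hc
  obtain ⟨⟨x, ⟨hx₁, hx₂⟩, hxN⟩, ⟨y, ⟨hy₁, hy₃⟩, hyN⟩, ⟨z, ⟨hz₂, hz₃⟩, hzN⟩⟩ := hc
  have hxyz := h x y z <| le_trans (inf_le_inf (inf_le_inf
    (span_singleton_sup_span_singleton_le hx₁ hy₁)
    (span_singleton_sup_span_singleton_le hx₂ hz₂))
    (span_singleton_sup_span_singleton_le hy₃ hz₃)) hle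
  rcases hxyz with h' | h' | h'
  · exact hxN (h' ⟨mem_span_singleton_sup_left x y, mem_span_singleton_sup_left x z⟩)
  · exact hyN (h' ⟨mem_span_singleton_sup_right x y, mem_span_singleton_sup_left y z⟩)
  · exact hzN (h' ⟨mem_span_singleton_sup_right x z, mem_span_singleton_sup_right y z⟩)

end Submodule

theorem stmt_3 {R M : Type*} [CommRing R] [AddCommGroup M] [Module R M]
    (N : Submodule R M) (hN : N ≠ ⊤) :
    IsStrongly2Irreducible N ↔
      ∀ x y z : M,
        ((R ∙ x) ⊔ (R ∙ y)) ⊓ ((R ∙ x) ⊔ (R ∙ z)) ⊓ ((R ∙ y) ⊔ (R ∙ z)) ≤ N →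
          ((R ∙ x) ⊔ (R ∙ y)) ⊓ ((R ∙ x) ⊔ (R ∙ z)) ≤ N ∨
          ((R ∙ x) ⊔ (R ∙ y)) ⊓ ((R ∙ y) ⊔ (R ∙ z)) ≤ N ∨
          ((R ∙ x) ⊔ (R ∙ z)) ⊓ ((R ∙ y) ⊔ (R ∙ z)) ≤ N :=
  ⟨fun h _ _ _ => h.2 _ _ _, Submodule.isStrongly2Irreducible_of_span_singleton_sup hN⟩
end

section
/- Let R be a commutative ring with identity and M a strong comultiplication R-module. Then every non-zero proper ideal of R is a strongly sum 2-irreducible submodule of the R-module R if and only if every non-zero proper submodule of M is a strongly 2-irreducible submodule of M. -/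
def IsStronglySum2Irreducible {R M : Type*} [CommRing R] [AddCommGroup M] [Module R M]
    (N : Submodule R M) : Prop :=
  ∀ H₁ H₂ H₃ : Submodule R M, N ≤ H₁ ⊔ H₂ ⊔ H₃ →
    N ≤ H₁ ⊔ H₂ ∨ N ≤ H₁ ⊔ H₃ ∨ N ≤ H₂ ⊔ H₃

def IsComultiplicationModule (R M : Type*) [CommRing R] [AddCommGroup M] [Module R M] : Prop :=
  ∀ N : Submodule R M, N = Submodule.torsionBySet R M (N.annihilator : Set R)

def HasDAC (R M : Type*) [CommRing R] [AddCommGroup M] [Module R M] : Prop :=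
  ∀ I : Ideal R, I = (Submodule.torsionBySet R M (I : Set R)).annihilator

section Lattice

variable {α β : Type*} [Lattice α] [Lattice β]

def StronglySupTwoIrred (a : α) : Prop :=
  ∀ x y z : α, a ≤ x ⊔ y ⊔ z → a ≤ x ⊔ y ∨ a ≤ x ⊔ z ∨ a ≤ y ⊔ z

theorem OrderIso.stronglySupTwoIrred_apply_iff (e : α ≃o β) {a : α} :
    StronglySupTwoIrred (e a) ↔ StronglySupTwoIrred a := by
  simp only [StronglySupTwoIrred, e.surjective.forall, ← map_sup, e.le_iff_le]

end Lattice

section Submodule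

variable {R M : Type*} [CommRing R] [AddCommGroup M] [Module R M]

theorem isStronglySum2Irreducible_iff {N : Submodule R M} :
    IsStronglySum2Irreducible N ↔ StronglySupTwoIrred N :=
  Iff.rfl

theorem isStrongly2Irreducible_iff {N : Submodule R M} :
    IsStrongly2Irreducible N ↔ N ≠ ⊤ ∧ StronglySupTwoIrred (OrderDual.toDual N) :=
  Iff.rfl

def IsComultiplicationModule.annihilatorOrderIso (hcm : IsComultiplicationModule R M)
    (hdac : HasDAC R M) : (Submodule R M)ᵒᵈ ≃o Ideal R where
  toFun N := (OrderDual.ofDual N).annihilator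
  invFun I := OrderDual.toDual (Submodule.torsionBySet R M I)
  left_inv N := (hcm N).symm
  right_inv I := (hdac I).symm
  map_rel_iff' {N N'} := by
    have := Submodule.torsion_gc R M (OrderDual.ofDual N')
      (OrderDual.toDual (OrderDual.ofDual N).annihilator)
    beta_reduce at this
    rwa [OrderDual.ofDual_toDual, ← hcm] at this

end Submodule

theorem stmt_6 {R M : Type*} [CommRing R] [AddCommGroup M] [Module R M]
    (hcm : IsComultiplicationModule R M) (hdac : HasDAC R M) :
    (∀ I : Ideal R, I ≠ ⊥ → I ≠ ⊤ → IsStronglySum2Irreducible I) ↔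
      (∀ N : Submodule R M, N ≠ ⊥ → N ≠ ⊤ → IsStrongly2Irreducible N) := by
  let e := hcm.annihilatorOrderIso hdac
  rw [e.surjective.forall, OrderDual.toDual.surjective.forall]
  simp only [ne_eq, map_eq_bot_iff, map_eq_top_iff, OrderDual.toDual_eq_bot,
    OrderDual.toDual_eq_top, isStronglySum2Irreducible_iff, e.stronglySupTwoIrred_apply_iff,
    isStrongly2Irreducible_iff]
  exact ⟨fun h N hN0 hNT => ⟨hNT, h N hNT hN0⟩, fun h N hNT hN0 => (h N hN0 hNT).2⟩
end

section
/- Let R be a commutative ring with identity and M an R-module. If N₁ and N₂ are strongly irreducible submodules of M, then N₁ ∩ N₂ is a strongly 2-irreducible submodule of M. -/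
def IsStronglyIrreducible {R M : Type*} [CommRing R] [AddCommGroup M] [Module R M]
    (N : Submodule R M) : Prop :=
  N ≠ ⊤ ∧ ∀ H₁ H₂ : Submodule R M, H₁ ⊓ H₂ ≤ N → H₁ ≤ N ∨ H₂ ≤ N

/-! Strongly irreducible submodules are exactly the inf-prime elements of the lattice of
submodules. If each of two inf-prime elements `n₁`, `n₂` lies above `a ⊓ b ⊓ c`, each of them lies
above one of `a`, `b`, `c`; those (at most) two elements form a pair whose meet lies below
`n₁ ⊓ n₂`. -/

theorem isStronglyIrreducible_iff_infPrime {R M : Type*} [CommRing R] [AddCommGroup M]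
    [Module R M] (N : Submodule R M) : IsStronglyIrreducible N ↔ InfPrime N := by
  rw [IsStronglyIrreducible, InfPrime, isMax_iff_eq_top]

theorem InfPrime.inf_le_inf_of_inf_inf_le {α : Type*} [SemilatticeInf α] {n₁ n₂ a b c : α}
    (h₁ : InfPrime n₁) (h₂ : InfPrime n₂) (h : a ⊓ b ⊓ c ≤ n₁ ⊓ n₂) :
    a ⊓ b ≤ n₁ ⊓ n₂ ∨ a ⊓ c ≤ n₁ ⊓ n₂ ∨ b ⊓ c ≤ n₁ ⊓ n₂ := by
  simp only [le_inf_iff, h₁.inf_le, h₂.inf_le] at h ⊢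
  tauto

theorem stmt_8 {R M : Type*} [CommRing R] [AddCommGroup M] [Module R M]
    (N₁ N₂ : Submodule R M)
    (h₁ : IsStronglyIrreducible N₁) (h₂ : IsStronglyIrreducible N₂) :
    IsStrongly2Irreducible (N₁ ⊓ N₂) := by
  rw [isStronglyIrreducible_iff_infPrime] at h₁ h₂
  exact ⟨fun h => h₁.ne_top (inf_eq_top_iff.mp h).1,
    fun _ _ _ h => h₁.inf_le_inf_of_inf_inf_le h₂ h⟩
end

section
/- Let R be a commutative ring with identity, M a multiplication R-module, and N₁, N₂, N₃ prime submodules of M such that N₁ + N₂ = N₁ + N₃ = N₂ + N₃ = M. Then N₁ ∩ N₂ ∩ N₃ is not a strongly 2-irreducible submodule of M. -/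
/-! A prime submodule of a multiplication module is "prime" in the lattice sense: it contains one of
two submodules whenever it contains their intersection. A prime comaximal with both `A` and `B`
therefore cannot contain `A ⊓ B`. Applied to the three pairwise comaximal primes, this rules out
each of the three alternatives that strong 2-irreducibility offers for `N₁ ⊓ N₂ ⊓ N₃`. -/

namespace IsPrimeSubmodule

variable {R M : Type*} [CommRing R] [AddCommGroup M] [Module R M] {P A B : Submodule R M}

theorem le_or_le_of_inf_le (hmul : IsMultiplicationModule R M) (hP : IsPrimeSubmodule P)
    (h : A ⊓ B ≤ P) : A ≤ P ∨ B ≤ P := by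
  refine or_iff_not_imp_right.mpr fun hB => ?_
  obtain ⟨m, hmB, hmP⟩ := SetLike.not_le_iff_exists.mp hB
  obtain ⟨I, rfl⟩ := hmul A
  -- for `i ∈ I`, `i • m ∈ (I • ⊤) ⊓ B ≤ P` with `m ∉ P`, so `i` annihilates `M` modulo `P`
  refine Submodule.smul_le.mpr fun i hi x hx => ?_
  have him : i • m ∈ P := h ⟨Submodule.smul_mem_smul hi trivial, B.smul_mem i hmB⟩
  exact Submodule.mem_colon.mp ((hP.2 i m him).resolve_left hmP) x hx

theorem not_le_of_sup_eq_top (hP : IsPrimeSubmodule P) (hA : A ⊔ P = ⊤) : ¬ A ≤ P :=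
  fun h => hP.1 (by rwa [sup_eq_right.mpr h] at hA)

theorem not_inf_le_of_sup_eq_top (hmul : IsMultiplicationModule R M) (hP : IsPrimeSubmodule P)
    (hA : A ⊔ P = ⊤) (hB : B ⊔ P = ⊤) : ¬ A ⊓ B ≤ P := fun h =>
  (hP.le_or_le_of_inf_le hmul h).elim (hP.not_le_of_sup_eq_top hA) (hP.not_le_of_sup_eq_top hB)

end IsPrimeSubmodule

theorem stmt_9 {R M : Type*} [CommRing R] [AddCommGroup M] [Module R M]
    (hmul : IsMultiplicationModule R M)
    (N₁ N₂ N₃ : Submodule R M)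
    (h₁ : IsPrimeSubmodule N₁) (h₂ : IsPrimeSubmodule N₂) (h₃ : IsPrimeSubmodule N₃)
    (h12 : N₁ ⊔ N₂ = ⊤) (h13 : N₁ ⊔ N₃ = ⊤) (h23 : N₂ ⊔ N₃ = ⊤) :
    ¬ IsStrongly2Irreducible (N₁ ⊓ N₂ ⊓ N₃) := by
  rintro ⟨-, hirr⟩
  rcases hirr N₁ N₂ N₃ le_rfl with h | h | h
  · exact h₃.not_inf_le_of_sup_eq_top hmul h13 h23 (h.trans inf_le_right)
  · exact h₂.not_inf_le_of_sup_eq_top hmul h12 (sup_comm N₂ N₃ ▸ h23)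
      (h.trans (inf_le_left.trans inf_le_right))
  · exact h₁.not_inf_le_of_sup_eq_top hmul (sup_comm N₁ N₂ ▸ h12) (sup_comm N₁ N₃ ▸ h13)
      (h.trans (inf_le_left.trans inf_le_left))
end

section
/- Let R be a commutative ring with identity and M a multiplication R-module such that every proper submodule of M is strongly 2-irreducible. Then M has at most two maximal submodules; that is, if P₁, P₂, P₃ are maximal proper submodules of M, then P₁ = P₂ or P₁ = P₃ or P₂ = P₃. -/
private lemma coatom_smul_case {R M : Type*} [CommRing R] [AddCommGroup M] [Module R M]
    (S : Submodule R M) (hS : IsCoatom S) (r : R) (m : M)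
    (hrm : r • m ∈ S) (hm : m ∉ S) : ∀ x : M, r • x ∈ S := by
  intro x
  have hlt : S < S ⊔ Submodule.span R {m} := by
    refine lt_of_le_of_ne le_sup_left (fun hEq => hm ?_)
    rw [hEq]
    exact Submodule.mem_sup_right (Submodule.mem_span_singleton_self m)
  have htop : S ⊔ Submodule.span R {m} = ⊤ := hS.2 _ hlt
  have hx : x ∈ S ⊔ Submodule.span R {m} := htop ▸ Submodule.mem_top
  obtain ⟨y, hy, z, hz, hyz⟩ := Submodule.mem_sup.mp hx
  obtain ⟨t, rfl⟩ := Submodule.mem_span_singleton.mp hz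
  have : r • x = r • y + t • (r • m) := by
    rw [← hyz, smul_add, smul_comm t r m]
  rw [this]
  exact S.add_mem (S.smul_mem r hy) (S.smul_mem t hrm)

private lemma key_step {R M : Type*} [CommRing R] [AddCommGroup M] [Module R M]
    (hmul : IsMultiplicationModule R M) (P Q S : Submodule R M)
    (hP : IsCoatom P) (hQ : IsCoatom Q) (hS : IsCoatom S)
    (hle : P ⊓ Q ≤ S) : P = S ∨ Q = S := by
  obtain ⟨I, hI⟩ := hmul P
  obtain ⟨J, hJ⟩ := hmul Q
  set p : Ideal R := S.colon ⊤ with hp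
  -- S = p • ⊤
  have hScol : S = p • (⊤ : Submodule R M) := by
    obtain ⟨K, hK⟩ := hmul S
    have hKp : K ≤ p := by
      intro k hk
      rw [Submodule.mem_colon]
      intro x _
      rw [hK]
      exact Submodule.smul_mem_smul hk Submodule.mem_top
    apply le_antisymm
    · rw [hK]; exact Submodule.smul_mono_left hKp
    · exact Submodule.smul_le.mpr fun r hr y _ => (Submodule.mem_colon.mp hr) y trivial
  -- p is a prime ideal
  have hpne : p ≠ ⊤ := by
    intro hEq
    apply hS.1
    rw [hScol, hEq, Submodule.top_smul]
  have hprime : p.IsPrime := by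
    refine ⟨hpne, ?_⟩
    intro x y hxy
    by_cases hy : y ∈ p
    · exact Or.inr hy
    · left
      rw [Submodule.mem_colon] at hy
      push_neg at hy
      obtain ⟨m, -, hm⟩ := hy
      have hxym : (x * y) • m ∈ S := (Submodule.mem_colon.mp hxy) m trivial
      rw [mul_smul] at hxym
      have := coatom_smul_case S hS x (y • m) hxym hm
      rw [Submodule.mem_colon]
      exact fun z _ => this z
  -- I * J ≤ p
  have hIJ : I * J ≤ p := by
    have hsub : (I * J) • (⊤ : Submodule R M) ≤ S := by
      rw [mul_smul]
      calc I • (J • (⊤ : Submodule R M)) = I • Q := by rw [hJ]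
        _ ≤ P ⊓ Q := le_inf (by rw [hI]; exact Submodule.smul_mono le_rfl le_top)
            (Submodule.smul_le.mpr fun r _ m hm => Q.smul_mem r hm)
        _ ≤ S := hle
    intro x hx
    rw [Submodule.mem_colon]
    intro m _
    exact hsub (Submodule.smul_mem_smul hx Submodule.mem_top)
  rcases (Ideal.IsPrime.mul_le hprime).mp hIJ with hIp | hJp
  · left
    have hPS : P ≤ S := by rw [hI, hScol]; exact Submodule.smul_mono_left hIp
    rcases lt_or_eq_of_le hPS with hlt | hEq
    · exact absurd (hP.2 _ hlt) hS.1
    · exact hEq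
  · right
    have hQS : Q ≤ S := by rw [hJ, hScol]; exact Submodule.smul_mono_left hJp
    rcases lt_or_eq_of_le hQS with hlt | hEq
    · exact absurd (hQ.2 _ hlt) hS.1
    · exact hEq

theorem stmt_10 {R M : Type*} [CommRing R] [AddCommGroup M] [Module R M]
    (hmul : IsMultiplicationModule R M)
    (h : ∀ N : Submodule R M, N ≠ ⊤ → IsStrongly2Irreducible N)
    (P₁ P₂ P₃ : Submodule R M)
    (h₁ : IsCoatom P₁) (h₂ : IsCoatom P₂) (h₃ : IsCoatom P₃) :
    P₁ = P₂ ∨ P₁ = P₃ ∨ P₂ = P₃ := by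
  set N : Submodule R M := P₁ ⊓ P₂ ⊓ P₃ with hN
  have hNne : N ≠ ⊤ := by
    intro hEq
    apply h₁.1
    have : (⊤ : Submodule R M) ≤ P₁ := hEq ▸ (inf_le_left.trans inf_le_left)
    exact top_le_iff.mp this
  obtain ⟨-, hirr⟩ := h N hNne
  rcases hirr P₁ P₂ P₃ le_rfl with hc | hc | hc
  · have : P₁ ⊓ P₂ ≤ P₃ := hc.trans (inf_le_right)
    rcases key_step hmul P₁ P₂ P₃ h₁ h₂ h₃ this with hEq | hEq
    · exact Or.inr (Or.inl hEq)
    · exact Or.inr (Or.inr hEq)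
  · have : P₁ ⊓ P₃ ≤ P₂ := hc.trans (inf_le_left.trans inf_le_right)
    rcases key_step hmul P₁ P₃ P₂ h₁ h₃ h₂ this with hEq | hEq
    · exact Or.inl hEq
    · exact Or.inr (Or.inr hEq.symm)
  · have : P₂ ⊓ P₃ ≤ P₁ := hc.trans (inf_le_left.trans inf_le_left)
    rcases key_step hmul P₂ P₃ P₁ h₂ h₃ h₁ this with hEq | hEq
    · exact Or.inl hEq.symm
    · exact Or.inr (Or.inl hEq.symm)
end

section
/- Let R be a commutative ring with identity, M an R-module, I an ideal of R, and N a submodule of M. Then rad(IN) = rad(N) ∩ rad(IM). -/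
theorem stmt_11 {R M : Type*} [CommRing R] [AddCommGroup M] [Module R M]
    (I : Ideal R) (N : Submodule R M) :
    radSubmodule (I • N) = radSubmodule N ⊓ radSubmodule (I • (⊤ : Submodule R M)) := by
  have hset : {P : Submodule R M | IsPrimeSubmodule P ∧ I • N ≤ P}
      = {P | IsPrimeSubmodule P ∧ N ≤ P} ∪
        {P | IsPrimeSubmodule P ∧ I • (⊤ : Submodule R M) ≤ P} := by
    ext P
    simp only [Set.mem_setOf_eq, Set.mem_union]
    constructor
    · rintro ⟨hP, hle⟩
      by_cases hN : N ≤ P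
      · exact Or.inl ⟨hP, hN⟩
      · refine Or.inr ⟨hP, ?_⟩
        rw [Submodule.smul_le]
        intro i hi m _
        obtain ⟨n, hn, hnP⟩ := SetLike.not_le_iff_exists.1 hN
        have hin : i • n ∈ P := hle (Submodule.smul_mem_smul hi hn)
        rcases hP.2 i n hin with h | h
        · exact absurd h hnP
        · exact Submodule.mem_colon.1 h m (Submodule.mem_top (R := R))
    · rintro (⟨hP, hle⟩ | ⟨hP, hle⟩)
      · exact ⟨hP, le_trans Submodule.smul_le_right hle⟩
      · exact ⟨hP, le_trans (Submodule.smul_mono le_rfl le_top) hle⟩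
  unfold radSubmodule
  rw [hset, sInf_union]
end

section
/- Let R be a commutative ring with identity, M a finitely generated multiplication R-module, and N a radical submodule of M (i.e., N is proper and rad(N) = N). Then the following are equivalent: (a) N is a strongly 2-irreducible submodule of M; (b) N is a 2-absorbing submodule of M; (c) N is a 2-absorbing primary submodule of M; (d) N is either a prime submodule of M or N = P₁ ∩ P₂ for some prime submodules P₁, P₂ of M. -/
def Is2Absorbing {R M : Type*} [CommRing R] [AddCommGroup M] [Module R M]
    (N : Submodule R M) : Prop :=
  N ≠ ⊤ ∧ ∀ (a b : R) (m : M), (a * b) • m ∈ N →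
    a • m ∈ N ∨ b • m ∈ N ∨ a * b ∈ N.colon ⊤

/-!
Everything is transported to the colon ideal `J = (N : M)`. Both (a) and (b) make `J` a
2-absorbing ideal; for (a), if `abc ∈ J` one intersects separately the primes `P ⊇ N` with
`a ∈ (P : M)`, with `b ∈ (P : M)` and with `c ∈ (P : M)`: since `rad N = N` the three
intersections meet inside `N`. In a multiplication module with `Rm = IM` one has
`r • m ∈ N ↔ r I ⊆ J`, which turns 2-absorption of `J` back into (b).

A radical 2-absorbing ideal is prime or the intersection `p₁ ⊓ p₂` of two incomparable primes,
because the product of two distinct minimal primes of `J` lies in `J`. In the second case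
`N = (N :_M y) ⊓ (N :_M x)` for `y ∈ p₂ \ p₁`, `x ∈ p₁ \ p₂`, where `(N :_M y)` is
`N.comap (y • LinearMap.id)`; these two submodules are prime with colon ideals `p₁` and `p₂`.
Prime submodules of a multiplication module are inf-prime, which gives (d) ⇒ (a), and (b) ⇔ (c)
holds because `rad N = N`.
-/

namespace Submodule

variable {R M : Type*} [CommRing R] [AddCommGroup M] [Module R M]

theorem le_of_diff_subset {A B C : Submodule R M} (hAB : ¬A ≤ B) (h : (A : Set M) \ B ⊆ C) :
    A ≤ C := by
  obtain ⟨x, hxA, hxB⟩ := SetLike.not_le_iff_exists.mp hAB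
  intro a ha
  by_cases haB : a ∈ B
  · have : a + x ∉ B := fun hB => hxB (by simpa using B.sub_mem hB haB)
    simpa using C.sub_mem (h ⟨A.add_mem ha hxA, this⟩) (h ⟨hxA, hxB⟩)
  · exact h ⟨ha, haB⟩

theorem mem_colon_top {K : Submodule R M} {r : R} : r ∈ K.colon ⊤ ↔ ∀ m : M, r • m ∈ K := by
  simp [mem_colon]

theorem colon_top_ne_top_iff {K : Submodule R M} : K.colon ⊤ ≠ ⊤ ↔ K ≠ ⊤ := by
  simp only [ne_eq, colon_eq_top_iff_subset, Set.top_eq_univ, Set.univ_subset_iff, coe_eq_univ]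

theorem mem_colon_sInf {S : Set (Submodule R M)} {r : R} :
    r ∈ (sInf S).colon ⊤ ↔ ∀ P ∈ S, r ∈ P.colon ⊤ := by
  simp only [mem_colon_top, mem_sInf]
  exact ⟨fun h P hP m => h m P hP, fun h m P hP => h P hP m⟩

theorem mem_colon_comap_smul {N : Submodule R M} {y r : R} :
    r ∈ (N.comap (y • LinearMap.id)).colon ⊤ ↔ y * r ∈ N.colon ⊤ := by
  simp only [mem_colon_top, mem_comap, LinearMap.smul_apply, LinearMap.id_apply, smul_smul]

theorem smul_mem_iff_forall_mul_mem_colon {N : Submodule R M} {I : Ideal R} {m : M}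
    (hm : span R {m} = I • ⊤) {r : R} : r • m ∈ N ↔ ∀ i ∈ I, r * i ∈ N.colon ⊤ := by
  rw [← mem_colon_span_singleton, hm, mem_colon]
  show I • ⊤ ≤ N.comap (r • LinearMap.id) ↔ _
  simp only [smul_le, mem_top, forall_const, mem_comap, LinearMap.smul_apply, LinearMap.id_apply,
    mem_colon_top, mul_smul]

end Submodule

namespace Ideal

variable {R : Type*} [CommRing R]

structure IsTwoAbsorbing (J : Ideal R) : Prop where
  ne_top : J ≠ ⊤
  mul_mem_or : ∀ {a b c : R}, a * b * c ∈ J → a * b ∈ J ∨ a * c ∈ J ∨ b * c ∈ J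

theorem exists_notMem_mul_mem_of_mem_minimalPrimes {J p : Ideal R} (hJ : J.IsRadical)
    (hp : p ∈ J.minimalPrimes) {x : R} (hx : x ∈ p) : ∃ s ∉ p, s * x ∈ J := by
  have := hp.1.1
  have hx' : algebraMap R (Localization.AtPrime p) x ∈ (J.map (algebraMap R _)).radical := by
    rw [IsLocalization.AtPrime.radical_map_of_mem_minimalPrimes _ p J hp]
    exact mem_map_of_mem _ hx
  obtain ⟨n, hn⟩ := hx'
  rw [← map_pow, IsLocalization.algebraMap_mem_map_algebraMap_iff p.primeCompl] at hn
  obtain ⟨s, hs, hsx⟩ := hn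
  refine ⟨s, hs, hJ ⟨n + 1, ?_⟩⟩
  rw [show (s * x) ^ (n + 1) = s ^ n * x * (s * x ^ n) by ring]
  exact J.mul_mem_left _ hsx

namespace IsTwoAbsorbing

variable {J p₁ p₂ : Ideal R}

theorem mul_mem_or_mem_or_mem (hJ : J.IsTwoAbsorbing) (hrad : J.IsRadical)
    (hp₁ : p₁ ∈ J.minimalPrimes) (hp₂ : p₂ ∈ J.minimalPrimes) {a b : R} (ha : a ∈ p₁)
    (hb : b ∈ p₂) : a * b ∈ J ∨ a ∈ p₂ ∨ b ∈ p₁ := by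
  obtain ⟨s, hs, hsa⟩ := exists_notMem_mul_mem_of_mem_minimalPrimes hrad hp₁ ha
  obtain ⟨t, ht, htb⟩ := exists_notMem_mul_mem_of_mem_minimalPrimes hrad hp₂ hb
  have habst : a * b * (s + t) ∈ J := by
    rw [show a * b * (s + t) = b * (s * a) + a * (t * b) by ring]
    exact J.add_mem (J.mul_mem_left _ hsa) (J.mul_mem_left _ htb)
  rcases hJ.mul_mem_or habst with h | h | h
  · exact Or.inl h
  · have hat : a * t ∈ J := by
      rw [show a * t = a * (s + t) - s * a by ring]
      exact J.sub_mem h hsa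
    exact Or.inr (Or.inl ((hp₂.1.1.mem_or_mem (hp₂.1.2 hat)).resolve_right ht))
  · have hbs : b * s ∈ J := by
      rw [show b * s = b * (s + t) - t * b by ring]
      exact J.sub_mem h htb
    exact Or.inr (Or.inr ((hp₁.1.1.mem_or_mem (hp₁.1.2 hbs)).resolve_right hs))

theorem mul_le_of_mem_minimalPrimes (hJ : J.IsTwoAbsorbing) (hrad : J.IsRadical)
    (hp₁ : p₁ ∈ J.minimalPrimes) (hp₂ : p₂ ∈ J.minimalPrimes) (h₁₂ : ¬p₁ ≤ p₂)
    (h₂₁ : ¬p₂ ≤ p₁) : p₁ * p₂ ≤ J := by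
  have hdiff {a b : R} (ha : a ∈ (p₁ : Set R) \ p₂) (hb : b ∈ (p₂ : Set R) \ p₁) :
      a * b ∈ J :=
    (hJ.mul_mem_or_mem_or_mem hrad hp₁ hp₂ ha.1 hb.1).resolve_right (not_or.2 ⟨ha.2, hb.2⟩)
  have hleft {b : R} (hb : b ∈ (p₂ : Set R) \ p₁) : p₁ ≤ J.colon {b} :=
    Submodule.le_of_diff_subset h₁₂ fun a ha => by simpa using hdiff ha hb
  refine mul_le.2 fun a ha b hb => ?_
  have hright : p₂ ≤ J.colon {a} :=
    Submodule.le_of_diff_subset h₂₁ fun b hb => by simpa [mul_comm] using hleft hb ha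
  simpa [mul_comm] using hright hb

theorem isPrime_or_eq_inf (hJ : J.IsTwoAbsorbing) (hrad : J.IsRadical) :
    J.IsPrime ∨ ∃ p₁ p₂ : Ideal R, p₁.IsPrime ∧ p₂.IsPrime ∧ ¬p₁ ≤ p₂ ∧ ¬p₂ ≤ p₁ ∧
      J = p₁ ⊓ p₂ := by
  by_cases hsub : J.minimalPrimes.Subsingleton
  · obtain ⟨p, hp⟩ := nonempty_minimalPrimes hJ.ne_top
    left
    rw [← hrad.radical, ← sInf_minimalPrimes, hsub.eq_singleton_of_mem hp, sInf_singleton]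
    exact hp.1.1
  obtain ⟨p₁, hp₁, p₂, hp₂, hne⟩ := Set.not_subsingleton_iff.mp hsub
  have h₁₂ : ¬p₁ ≤ p₂ := fun h => hne (le_antisymm h (hp₂.2 hp₁.1 h))
  have h₂₁ : ¬p₂ ≤ p₁ := fun h => hne (le_antisymm (hp₁.2 hp₂.1 h) h)
  refine Or.inr ⟨p₁, p₂, hp₁.1.1, hp₂.1.1, h₁₂, h₂₁, le_antisymm (le_inf hp₁.1.2 hp₂.1.2) ?_⟩
  rintro z ⟨hz₁, hz₂⟩
  refine hrad ⟨2, ?_⟩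
  rw [pow_two]
  exact hJ.mul_le_of_mem_minimalPrimes hrad hp₁ hp₂ h₁₂ h₂₁ (mul_mem_mul hz₁ hz₂)

theorem forall_mul_mem_or_mul_mem (hJ : J.IsTwoAbsorbing) {I : Ideal R} {a b : R}
    (h : ∀ i ∈ I, a * b * i ∈ J) :
    (∀ i ∈ I, a * i ∈ J) ∨ (∀ i ∈ I, b * i ∈ J) ∨ a * b ∈ J := by
  by_cases hab : a * b ∈ J
  · exact Or.inr (Or.inr hab)
  have hcover : (I : Set R) ⊆ (J.colon {a} : Set R) ∪ J.colon {b} := fun i hi => by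
    simpa [mul_comm] using (hJ.mul_mem_or (h i hi)).resolve_left hab
  simpa [SetLike.le_def, mul_comm, hab] using AddSubgroupClass.subset_union.mp hcover

end IsTwoAbsorbing

end Ideal

section Module

open Submodule

variable {R M : Type*} [CommRing R] [AddCommGroup M] [Module R M]

theorem IsPrimeSubmodule.colon_isPrime {P : Submodule R M} (hP : IsPrimeSubmodule P) :
    (P.colon ⊤).IsPrime := by
  refine ⟨colon_top_ne_top_iff.2 hP.1, fun {a b} hab => or_iff_not_imp_left.2 fun ha => ?_⟩
  refine mem_colon_top.2 fun m => (hP.2 a (b • m) ?_).resolve_right ha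
  rw [smul_smul]
  exact mem_colon_top.1 hab m

theorem isRadical_colon_of_radSubmodule_eq {N : Submodule R M} (hrad : radSubmodule N = N) :
    (N.colon ⊤).IsRadical := by
  rintro r ⟨n, hn⟩
  rw [← hrad, radSubmodule, mem_colon_sInf]
  rintro P ⟨hP, hNP⟩
  exact hP.colon_isPrime.mem_of_pow_mem n (colon_mono hNP le_rfl hn)

theorem Is2Absorbing.colon_isTwoAbsorbing {N : Submodule R M} (h : Is2Absorbing N) :
    (N.colon ⊤).IsTwoAbsorbing := by
  refine ⟨colon_top_ne_top_iff.2 h.1, fun {a b c} habc => or_iff_not_imp_left.2 fun hab => ?_⟩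
  have hcover : ((⊤ : Submodule R M) : Set M) ⊆
      N.comap ((a * c) • LinearMap.id) ∪ N.comap ((b * c) • LinearMap.id) := by
    rintro m -
    have := (h.2 a b (c • m) (by rw [smul_smul]; exact mem_colon_top.1 habc m)).imp_right
      (Or.resolve_right · hab)
    simpa [mul_smul] using this
  rw [mem_colon_top, mem_colon_top]
  simpa [SetLike.le_def] using AddSubgroupClass.subset_union.mp hcover

theorem IsStrongly2Irreducible.colon_isTwoAbsorbing {N : Submodule R M}
    (hrad : radSubmodule N = N) (h : IsStrongly2Irreducible N) : (N.colon ⊤).IsTwoAbsorbing := by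
  refine ⟨colon_top_ne_top_iff.2 h.1, fun {a b c} habc => ?_⟩
  let Q (r : R) : Submodule R M := sInf {P | IsPrimeSubmodule P ∧ N ≤ P ∧ r ∈ P.colon ⊤}
  have hQ (r : R) : r ∈ (Q r).colon ⊤ := mem_colon_sInf.2 fun _ hP => hP.2.2
  have hQN : Q a ⊓ Q b ⊓ Q c ≤ N := by
    rw [← hrad]
    refine le_sInf fun P ⟨hP, hNP⟩ => ?_
    have := hP.colon_isPrime
    rcases this.mem_or_mem (colon_mono hNP le_rfl habc) with hab | hc
    · rcases this.mem_or_mem hab with ha | hb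
      · exact inf_le_left.trans (inf_le_left.trans (sInf_le ⟨hP, hNP, ha⟩))
      · exact inf_le_left.trans (inf_le_right.trans (sInf_le ⟨hP, hNP, hb⟩))
    · exact inf_le_right.trans (sInf_le ⟨hP, hNP, hc⟩)
  have hpair {r s : R} (hrs : Q r ⊓ Q s ≤ N) : r * s ∈ N.colon ⊤ :=
    colon_mono hrs le_rfl <| by
      rw [inf_colon]
      exact ⟨Ideal.mul_mem_right _ _ (hQ r), Ideal.mul_mem_left _ _ (hQ s)⟩
  rcases h.2 _ _ _ hQN with h | h | h
  exacts [Or.inl (hpair h), Or.inr (Or.inl (hpair h)), Or.inr (Or.inr (hpair h))]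

namespace IsMultiplicationModule

theorem colon_le_colon_iff (hmul : IsMultiplicationModule R M) {K L : Submodule R M} :
    K.colon ⊤ ≤ L.colon ⊤ ↔ K ≤ L := by
  refine ⟨fun h => ?_, fun h => colon_mono h le_rfl⟩
  obtain ⟨I, rfl⟩ := hmul K
  refine smul_le.2 fun i hi m _ => mem_colon_top.1 (h (mem_colon_top.2 fun m' => ?_)) m
  exact smul_mem_smul hi trivial

theorem isPrimeSubmodule_inf_le_iff (hmul : IsMultiplicationModule R M)
    {P H₁ H₂ : Submodule R M} (hP : IsPrimeSubmodule P) :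
    H₁ ⊓ H₂ ≤ P ↔ H₁ ≤ P ∨ H₂ ≤ P := by
  rw [← hmul.colon_le_colon_iff, inf_colon, hP.colon_isPrime.inf_le, hmul.colon_le_colon_iff,
    hmul.colon_le_colon_iff]

theorem isPrimeSubmodule_of_colon_isPrime (hmul : IsMultiplicationModule R M)
    {K : Submodule R M} (hK : K ≠ ⊤) (h : (K.colon ⊤).IsPrime) : IsPrimeSubmodule K := by
  refine ⟨hK, fun r m hrm => or_iff_not_imp_right.2 fun hr => ?_⟩
  obtain ⟨I, hI⟩ := hmul (span R {m})
  rw [smul_mem_iff_forall_mul_mem_colon hI] at hrm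
  rw [← one_smul R m, smul_mem_iff_forall_mul_mem_colon hI]
  exact fun i hi => by simpa using (h.mem_or_mem (hrm i hi)).resolve_left hr

theorem isStrongly2Irreducible_inf (hmul : IsMultiplicationModule R M)
    {P₁ P₂ : Submodule R M} (hP₁ : IsPrimeSubmodule P₁) (hP₂ : IsPrimeSubmodule P₂) :
    IsStrongly2Irreducible (P₁ ⊓ P₂) := by
  refine ⟨ne_top_of_le_ne_top hP₁.1 inf_le_left, fun H₁ H₂ H₃ h => ?_⟩
  have h3 {P : Submodule R M} (hP : IsPrimeSubmodule P) (hle : H₁ ⊓ H₂ ⊓ H₃ ≤ P) :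
      H₁ ≤ P ∨ H₂ ≤ P ∨ H₃ ≤ P := by
    simpa only [hmul.isPrimeSubmodule_inf_le_iff hP, or_assoc] using hle
  -- each `Pⱼ` contains some `Hᵢ`, and any two indices lie in one of the three pairs
  rcases h3 hP₁ (h.trans inf_le_left) with h₁ | h₁ | h₁ <;>
    rcases h3 hP₂ (h.trans inf_le_right) with h₂ | h₂ | h₂ <;>
    simp [inf_le_of_left_le, inf_le_of_right_le, *]

theorem is2Absorbing_of_colon_isTwoAbsorbing (hmul : IsMultiplicationModule R M)
    {N : Submodule R M} (hN : (N.colon ⊤).IsTwoAbsorbing) : Is2Absorbing N := by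
  refine ⟨colon_top_ne_top_iff.1 hN.ne_top, fun a b m habm => ?_⟩
  obtain ⟨I, hI⟩ := hmul (span R {m})
  simp only [smul_mem_iff_forall_mul_mem_colon hI] at habm ⊢
  exact hN.forall_mul_mem_or_mul_mem habm

theorem comap_smul_inf_comap_smul_le (hmul : IsMultiplicationModule R M)
    {N : Submodule R M} {p₁ p₂ : Ideal R} [hp₁ : p₁.IsPrime] [hp₂ : p₂.IsPrime]
    (hN : N.colon ⊤ = p₁ ⊓ p₂) {x y : R} (hy : y ∉ p₁) (hx : x ∉ p₂) :
    N.comap (y • LinearMap.id) ⊓ N.comap (x • LinearMap.id) ≤ N := by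
  intro m hm
  obtain ⟨hym, hxm⟩ := mem_inf.1 hm
  obtain ⟨I, hI⟩ := hmul (span R {m})
  simp only [mem_comap, LinearMap.smul_apply, LinearMap.id_apply,
    smul_mem_iff_forall_mul_mem_colon hI, hN] at hym hxm
  rw [← one_smul R m, smul_mem_iff_forall_mul_mem_colon hI, hN]
  intro i hi
  rw [one_mul]
  exact ⟨(hp₁.mem_or_mem (hym i hi).1).resolve_left hy,
    (hp₂.mem_or_mem (hxm i hi).2).resolve_left hx⟩

theorem isPrimeSubmodule_comap_smul (hmul : IsMultiplicationModule R M)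
    {N : Submodule R M} {p q : Ideal R} [hp : p.IsPrime] (hN : N.colon ⊤ = p ⊓ q) {y : R}
    (hyq : y ∈ q) (hyp : y ∉ p) : IsPrimeSubmodule (N.comap (y • LinearMap.id)) := by
  have hcolon : (N.comap (y • LinearMap.id)).colon ⊤ = p := by
    ext r
    rw [mem_colon_comap_smul, hN, mem_inf, and_iff_left (q.mul_mem_right r hyq)]
    exact ⟨fun h => (hp.mem_or_mem h).resolve_left hyp, p.mul_mem_left y⟩
  refine hmul.isPrimeSubmodule_of_colon_isPrime (colon_top_ne_top_iff.1 ?_) (hcolon ▸ hp)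
  exact hcolon ▸ hp.ne_top

theorem exists_eq_inf_of_colon_eq_inf (hmul : IsMultiplicationModule R M)
    {N : Submodule R M} {p₁ p₂ : Ideal R} [p₁.IsPrime] [p₂.IsPrime] (hN : N.colon ⊤ = p₁ ⊓ p₂)
    (h₁₂ : ¬p₁ ≤ p₂) (h₂₁ : ¬p₂ ≤ p₁) :
    ∃ P₁ P₂ : Submodule R M, IsPrimeSubmodule P₁ ∧ IsPrimeSubmodule P₂ ∧ N = P₁ ⊓ P₂ := by
  obtain ⟨x, hx₁, hx₂⟩ := SetLike.not_le_iff_exists.mp h₁₂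
  obtain ⟨y, hy₂, hy₁⟩ := SetLike.not_le_iff_exists.mp h₂₁
  refine ⟨_, _, hmul.isPrimeSubmodule_comap_smul hN hy₂ hy₁,
    hmul.isPrimeSubmodule_comap_smul (inf_comm p₁ p₂ ▸ hN) hx₁ hx₂,
    le_antisymm (le_inf ?_ ?_) (hmul.comap_smul_inf_comap_smul_le hN hy₁ hx₂)⟩ <;>
  exact fun m hm => N.smul_mem _ hm

theorem isPrimeSubmodule_or_exists_eq_inf (hmul : IsMultiplicationModule R M)
    {N : Submodule R M} (hrad : radSubmodule N = N) (hN : (N.colon ⊤).IsTwoAbsorbing) :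
    IsPrimeSubmodule N ∨
      ∃ P₁ P₂ : Submodule R M, IsPrimeSubmodule P₁ ∧ IsPrimeSubmodule P₂ ∧ N = P₁ ⊓ P₂ := by
  rcases hN.isPrime_or_eq_inf (isRadical_colon_of_radSubmodule_eq hrad) with
    hp | ⟨p₁, p₂, _, _, h₁₂, h₂₁, hp⟩
  · exact Or.inl (hmul.isPrimeSubmodule_of_colon_isPrime (colon_top_ne_top_iff.1 hN.ne_top) hp)
  · exact Or.inr (hmul.exists_eq_inf_of_colon_eq_inf hp h₁₂ h₂₁)

end IsMultiplicationModule

end Module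

theorem stmt_12_general {R M : Type*} [CommRing R] [AddCommGroup M] [Module R M]
    (hmul : IsMultiplicationModule R M)
    (N : Submodule R M) (hrad : radSubmodule N = N) :
    (IsStrongly2Irreducible N ↔ Is2Absorbing N) ∧
    (IsStrongly2Irreducible N ↔ Is2AbsorbingPrimary N) ∧
    (IsStrongly2Irreducible N ↔
      (IsPrimeSubmodule N ∨
        ∃ P₁ P₂ : Submodule R M, IsPrimeSubmodule P₁ ∧ IsPrimeSubmodule P₂ ∧ N = P₁ ⊓ P₂)) := by
  have hd : (IsPrimeSubmodule N ∨ ∃ P₁ P₂ : Submodule R M, IsPrimeSubmodule P₁ ∧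
      IsPrimeSubmodule P₂ ∧ N = P₁ ⊓ P₂) → IsStrongly2Irreducible N := by
    rintro (hN | ⟨P₁, P₂, hP₁, hP₂, rfl⟩)
    · simpa using hmul.isStrongly2Irreducible_inf hN hN
    · exact hmul.isStrongly2Irreducible_inf hP₁ hP₂
  have ha : IsStrongly2Irreducible N ↔ (N.colon ⊤).IsTwoAbsorbing :=
    ⟨(·.colon_isTwoAbsorbing hrad), fun h => hd (hmul.isPrimeSubmodule_or_exists_eq_inf hrad h)⟩
  have hb : Is2Absorbing N ↔ (N.colon ⊤).IsTwoAbsorbing :=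
    ⟨(·.colon_isTwoAbsorbing), hmul.is2Absorbing_of_colon_isTwoAbsorbing⟩
  have hc : Is2AbsorbingPrimary N ↔ Is2Absorbing N := by
    rw [Is2AbsorbingPrimary, Is2Absorbing, hrad]
  exact ⟨ha.trans hb.symm, ha.trans (hc.trans hb).symm,
    ha.trans ⟨hmul.isPrimeSubmodule_or_exists_eq_inf hrad, fun h => ha.1 (hd h)⟩⟩

theorem stmt_12 {R M : Type*} [CommRing R] [AddCommGroup M] [Module R M]
    [Module.Finite R M] (hmul : IsMultiplicationModule R M)
    (N : Submodule R M) (hN : N ≠ ⊤) (hrad : radSubmodule N = N) :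
    (IsStrongly2Irreducible N ↔ Is2Absorbing N) ∧
    (IsStrongly2Irreducible N ↔ Is2AbsorbingPrimary N) ∧
    (IsStrongly2Irreducible N ↔
      (IsPrimeSubmodule N ∨
        ∃ P₁ P₂ : Submodule R M, IsPrimeSubmodule P₁ ∧ IsPrimeSubmodule P₂ ∧ N = P₁ ⊓ P₂)) :=
  stmt_12_general hmul N hrad
end

section
/- Let R be a commutative ring with identity, M a fully pure multiplication R-module, and N a proper submodule of M. Then the following are equivalent: (a) N is a strongly 2-irreducible submodule of M; (b) N is a 2-absorbing submodule of M; (c) N is a 2-irreducible submodule of M. -/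
def IsFullyPure (R M : Type*) [CommRing R] [AddCommGroup M] [Module R M] : Prop :=
  ∀ (N : Submodule R M) (I : Ideal R), I • N = (I • (⊤ : Submodule R M)) ⊓ N

section Aux

variable {R M : Type*} [CommRing R] [AddCommGroup M] [Module R M]

private lemma badawi1 {P : Ideal R}
    (h2 : ∀ a b c : R, a * b * c ∈ P → a * b ∈ P ∨ a * c ∈ P ∨ b * c ∈ P)
    (a b : R) (I : Ideal R) (h : ∀ x ∈ I, a * b * x ∈ P) :
    a * b ∈ P ∨ (∀ x ∈ I, a * x ∈ P) ∨ (∀ x ∈ I, b * x ∈ P) := by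
  by_cases hab : a * b ∈ P
  · exact Or.inl hab
  by_cases haI : ∀ x ∈ I, a * x ∈ P
  · exact Or.inr (Or.inl haI)
  by_cases hbI : ∀ x ∈ I, b * x ∈ P
  · exact Or.inr (Or.inr hbI)
  exfalso
  push_neg at haI hbI
  obtain ⟨c, hcI, hac⟩ := haI
  obtain ⟨d, hdI, hbd⟩ := hbI
  have hbc : b * c ∈ P := by
    rcases h2 a b c (h c hcI) with h' | h' | h' <;> tauto
  have had : a * d ∈ P := by
    rcases h2 a b d (h d hdI) with h' | h' | h' <;> tauto
  rcases h2 a b (c + d) (h _ (I.add_mem hcI hdI)) with h' | h' | h'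
  · exact hab h'
  · apply hac
    have he : a * c = a * (c + d) - a * d := by ring
    rw [he]; exact P.sub_mem h' had
  · apply hbd
    have he : b * d = b * (c + d) - b * c := by ring
    rw [he]; exact P.sub_mem h' hbc

private lemma badawi2 {P : Ideal R}
    (h2 : ∀ a b c : R, a * b * c ∈ P → a * b ∈ P ∨ a * c ∈ P ∨ b * c ∈ P)
    (a : R) (J I : Ideal R) (h : ∀ j ∈ J, ∀ i ∈ I, a * j * i ∈ P) :
    (∀ j ∈ J, a * j ∈ P) ∨ (∀ i ∈ I, a * i ∈ P) ∨ (∀ j ∈ J, ∀ i ∈ I, j * i ∈ P) := by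
  by_cases haJ : ∀ j ∈ J, a * j ∈ P
  · exact Or.inl haJ
  by_cases haI : ∀ i ∈ I, a * i ∈ P
  · exact Or.inr (Or.inl haI)
  refine Or.inr (Or.inr ?_)
  push_neg at haJ haI
  obtain ⟨j₀, hj₀J, hj₀⟩ := haJ
  obtain ⟨i₀, hi₀I, hi₀⟩ := haI
  have stepJ : ∀ j ∈ J, a * j ∈ P ∨ (∀ x ∈ I, j * x ∈ P) := by
    intro j hjJ
    rcases badawi1 h2 a j I (fun x hx => h j hjJ x hx) with h' | h' | h'
    · exact Or.inl h'
    · exact absurd (h' i₀ hi₀I) hi₀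
    · exact Or.inr h'
  have stepI : ∀ i ∈ I, a * i ∈ P ∨ (∀ x ∈ J, i * x ∈ P) := by
    intro i hiI
    have h'' : ∀ x ∈ J, a * i * x ∈ P := by
      intro x hx
      have he : a * i * x = a * x * i := by ring
      rw [he]; exact h x hx i hiI
    rcases badawi1 h2 a i J h'' with h' | h' | h'
    · exact Or.inl h'
    · exact absurd (h' j₀ hj₀J) hj₀
    · exact Or.inr h'
  intro j hjJ i hiI
  rcases stepJ j hjJ with haj | hjI
  · rcases stepI i hiI with hai | hiJ
    · -- both a*j, a*i in P; use the additive trick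
      have hj₀x : ∀ x ∈ I, j₀ * x ∈ P := (stepJ j₀ hj₀J).resolve_left hj₀
      have hi₀x : ∀ x ∈ J, i₀ * x ∈ P := (stepI i₀ hi₀I).resolve_left hi₀
      rcases h2 a (j + j₀) (i + i₀)
          (h _ (J.add_mem hjJ hj₀J) _ (I.add_mem hiI hi₀I)) with h' | h' | h'
      · exfalso; apply hj₀
        have he : a * j₀ = a * (j + j₀) - a * j := by ring
        rw [he]; exact P.sub_mem h' haj
      · exfalso; apply hi₀
        have he : a * i₀ = a * (i + i₀) - a * i := by ring
        rw [he]; exact P.sub_mem h' hai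
      · have hji₀ : j * i₀ ∈ P := by rw [mul_comm]; exact hi₀x j hjJ
        have hj₀i : j₀ * i ∈ P := hj₀x i hiI
        have hj₀i₀ : j₀ * i₀ ∈ P := hj₀x i₀ hi₀I
        have he : j * i = (j + j₀) * (i + i₀) - j * i₀ - j₀ * i - j₀ * i₀ := by ring
        rw [he]
        exact P.sub_mem (P.sub_mem (P.sub_mem h' hji₀) hj₀i) hj₀i₀
    · rw [mul_comm]; exact hiJ j hjJ
  · exact hjI i hiI

private lemma badawi3 {P : Ideal R}
    (h2 : ∀ a b c : R, a * b * c ∈ P → a * b ∈ P ∨ a * c ∈ P ∨ b * c ∈ P)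
    (I J K : Ideal R) (h : ∀ i ∈ I, ∀ j ∈ J, ∀ k ∈ K, i * j * k ∈ P) :
    (∀ i ∈ I, ∀ j ∈ J, i * j ∈ P) ∨ (∀ i ∈ I, ∀ k ∈ K, i * k ∈ P) ∨
      (∀ j ∈ J, ∀ k ∈ K, j * k ∈ P) := by
  by_cases hJK : ∀ j ∈ J, ∀ k ∈ K, j * k ∈ P
  · exact Or.inr (Or.inr hJK)
  by_cases hIK : ∀ i ∈ I, ∀ k ∈ K, i * k ∈ P
  · exact Or.inr (Or.inl hIK)
  refine Or.inl ?_
  push_neg at hJK hIK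
  obtain ⟨j₀, hj₀J, k₀, hk₀K, hjk₀⟩ := hJK
  obtain ⟨i₂, hi₂I, k₂, hk₂K, hik₂⟩ := hIK
  have step : ∀ i ∈ I, (∀ j ∈ J, i * j ∈ P) ∨ (∀ k ∈ K, i * k ∈ P) := by
    intro i hiI
    rcases badawi2 h2 i J K (fun j hj k hk => h i hiI j hj k hk) with h' | h' | h'
    · exact Or.inl h'
    · exact Or.inr h'
    · exact absurd (h' j₀ hj₀J k₀ hk₀K) hjk₀
  intro i hiI j hjJ
  rcases step i hiI with h' | h'
  · exact h' j hjJ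
  · have hi₂J : ∀ x ∈ J, i₂ * x ∈ P := (step i₂ hi₂I).resolve_right (by
      push_neg; exact ⟨k₂, hk₂K, hik₂⟩)
    rcases step (i + i₂) (I.add_mem hiI hi₂I) with h'' | h''
    · have he : i * j = (i + i₂) * j - i₂ * j := by ring
      rw [he]; exact P.sub_mem (h'' j hjJ) (hi₂J j hjJ)
    · exfalso; apply hik₂
      have he : i₂ * k₂ = (i + i₂) * k₂ - i * k₂ := by ring
      rw [he]; exact P.sub_mem (h'' k₂ hk₂K) (h' k₂ hk₂K)

private lemma smul_top_le {I : Ideal R} {N : Submodule R M} :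
    I • (⊤ : Submodule R M) ≤ N ↔ I ≤ N.colon ⊤ := by
  constructor
  · intro h r hr
    exact Submodule.mem_colon.mpr fun p _ => h (Submodule.smul_mem_smul hr Submodule.mem_top)
  · intro h
    exact Submodule.smul_le.mpr fun r hr n _ =>
      Submodule.mem_colon.mp (h hr) n trivial

private lemma colon_two_abs {N : Submodule R M} (hA : Is2Absorbing N) :
    ∀ a b c : R, a * b * c ∈ N.colon ⊤ →
      a * b ∈ N.colon ⊤ ∨ a * c ∈ N.colon ⊤ ∨ b * c ∈ N.colon ⊤ := by
  intro a b c habc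
  by_cases hab : a * b ∈ N.colon ⊤
  · exact Or.inl hab
  have step : ∀ m : M, (a * c) • m ∈ N ∨ (b * c) • m ∈ N := by
    intro m
    have h0 : (a * b) • (c • m) ∈ N := by
      rw [smul_smul]
      exact Submodule.mem_colon.mp habc m trivial
    rcases hA.2 a b (c • m) h0 with h | h | h
    · left; rwa [smul_smul] at h
    · right; rwa [smul_smul] at h
    · exact absurd h hab
  by_cases hac : a * c ∈ N.colon ⊤
  · exact Or.inr (Or.inl hac)
  by_cases hbc : b * c ∈ N.colon ⊤
  · exact Or.inr (Or.inr hbc)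
  exfalso
  rw [Submodule.mem_colon] at hac hbc
  push_neg at hac hbc
  obtain ⟨m₁, -, h1⟩ := hac
  obtain ⟨m₂, -, h2⟩ := hbc
  have hb1 : (b * c) • m₁ ∈ N := (step m₁).resolve_left h1
  have ha2 : (a * c) • m₂ ∈ N := (step m₂).resolve_right h2
  rcases step (m₁ + m₂) with h | h
  · rw [smul_add] at h
    exact h1 (by have := N.sub_mem h ha2; rwa [add_sub_cancel_right] at this)
  · rw [smul_add] at h
    exact h2 (by have := N.sub_mem h hb1; rwa [add_sub_cancel_left] at this)

private lemma smul_span_le (r : R) (m : M) :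
    Ideal.span {r} • Submodule.span R {m} ≤ Submodule.span R {r • m} := by
  apply Submodule.smul_le.mpr
  intro s hs n hn
  obtain ⟨t, rfl⟩ := Ideal.mem_span_singleton'.mp hs
  obtain ⟨u, rfl⟩ := Submodule.mem_span_singleton.mp hn
  have he : (t * r) • (u • m) = (t * u) • (r • m) := by
    rw [smul_smul, smul_smul, mul_assoc, mul_comm r u, ← mul_assoc]
  rw [he]
  exact Submodule.smul_mem _ _ (Submodule.mem_span_singleton_self _)

end Aux

theorem stmt_13 {R M : Type*} [CommRing R] [AddCommGroup M] [Module R M]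
    (hpure : IsFullyPure R M) (hmul : IsMultiplicationModule R M)
    (N : Submodule R M) (hN : N ≠ ⊤) :
    (IsStrongly2Irreducible N ↔ Is2Absorbing N) ∧
    (IsStrongly2Irreducible N ↔ Is2Irreducible N) := by
  -- strongly 2-irreducible → 2-absorbing
  have h_s2i_2abs : IsStrongly2Irreducible N → Is2Absorbing N := by
    rintro ⟨-, hs⟩
    refine ⟨hN, ?_⟩
    intro a b m habm
    set A : Submodule R M := Ideal.span {a} • ⊤ with hA
    set B : Submodule R M := Ideal.span {b} • ⊤ with hB
    set C : Submodule R M := Submodule.span R {m} with hC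
    have hABC : A ⊓ B ⊓ C ≤ N := by
      rw [inf_assoc, hB, hC, ← hpure (Submodule.span R {m}) (Ideal.span {b}), hA,
        ← hpure (Ideal.span {b} • Submodule.span R {m}) (Ideal.span {a})]
      calc Ideal.span {a} • (Ideal.span {b} • Submodule.span R {m})
          ≤ Ideal.span {a} • Submodule.span R {b • m} :=
            smul_mono_right _ (smul_span_le b m)
        _ ≤ Submodule.span R {a • b • m} := smul_span_le a (b • m)
        _ ≤ N := by
            rw [Submodule.span_le, Set.singleton_subset_iff, smul_smul]
            exact habm
    rcases hs A B C hABC with h | h | h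
    · refine Or.inr (Or.inr (Submodule.mem_colon.mpr fun p _ => h ⟨?_, ?_⟩))
      · rw [hA, mul_smul]
        exact Submodule.smul_mem_smul (Submodule.mem_span_singleton_self a)
          Submodule.mem_top
      · rw [hB, mul_comm, mul_smul]
        exact Submodule.smul_mem_smul (Submodule.mem_span_singleton_self b)
          Submodule.mem_top
    · refine Or.inl (h ⟨?_, ?_⟩)
      · rw [hA]
        exact Submodule.smul_mem_smul (Submodule.mem_span_singleton_self a)
          Submodule.mem_top
      · rw [hC]
        exact Submodule.smul_mem _ a (Submodule.mem_span_singleton_self m)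
    · refine Or.inr (Or.inl (h ⟨?_, ?_⟩))
      · rw [hB]
        exact Submodule.smul_mem_smul (Submodule.mem_span_singleton_self b)
          Submodule.mem_top
      · rw [hC]
        exact Submodule.smul_mem _ b (Submodule.mem_span_singleton_self m)
  -- 2-absorbing → strongly 2-irreducible
  have h_2abs_s2i : Is2Absorbing N → IsStrongly2Irreducible N := by
    intro hA
    refine ⟨hN, ?_⟩
    intro H₁ H₂ H₃ hle
    obtain ⟨I₁, rfl⟩ := hmul H₁
    obtain ⟨I₂, rfl⟩ := hmul H₂
    obtain ⟨I₃, rfl⟩ := hmul H₃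
    have e12 : (I₁ • ⊤ : Submodule R M) ⊓ (I₂ • ⊤) = (I₁ * I₂) • ⊤ := by
      rw [← hpure, ← Submodule.smul_assoc, smul_eq_mul]
    have e13 : (I₁ • ⊤ : Submodule R M) ⊓ (I₃ • ⊤) = (I₁ * I₃) • ⊤ := by
      rw [← hpure, ← Submodule.smul_assoc, smul_eq_mul]
    have e23 : (I₂ • ⊤ : Submodule R M) ⊓ (I₃ • ⊤) = (I₂ * I₃) • ⊤ := by
      rw [← hpure, ← Submodule.smul_assoc, smul_eq_mul]
    have e123 : (I₁ • ⊤ : Submodule R M) ⊓ (I₂ • ⊤) ⊓ (I₃ • ⊤) = (I₁ * I₂ * I₃) • ⊤ := by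
      rw [e12, ← hpure, ← Submodule.smul_assoc, smul_eq_mul]
    rw [e123] at hle
    have hP : ∀ i ∈ I₁, ∀ j ∈ I₂, ∀ k ∈ I₃, i * j * k ∈ N.colon ⊤ := by
      intro i hi j hj k hk
      exact smul_top_le.mp hle (Ideal.mul_mem_mul (Ideal.mul_mem_mul hi hj) hk)
    rcases badawi3 (colon_two_abs hA) I₁ I₂ I₃ hP with h | h | h
    · refine Or.inl ?_
      rw [e12]
      exact smul_top_le.mpr (Ideal.mul_le.mpr h)
    · refine Or.inr (Or.inl ?_)
      rw [e13]
      exact smul_top_le.mpr (Ideal.mul_le.mpr h)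
    · refine Or.inr (Or.inr ?_)
      rw [e23]
      exact smul_top_le.mpr (Ideal.mul_le.mpr h)
  -- strongly 2-irreducible → 2-irreducible
  have h_s2i_2irr : IsStrongly2Irreducible N → Is2Irreducible N := by
    rintro ⟨-, hs⟩ H₁ H₂ H₃ heq
    rcases hs H₁ H₂ H₃ heq.ge with h | h | h
    · exact Or.inl (le_antisymm (heq.le.trans inf_le_left) h)
    · exact Or.inr (Or.inl (le_antisymm
        (heq.le.trans (le_inf (inf_le_left.trans inf_le_left) inf_le_right)) h))
    · exact Or.inr (Or.inr (le_antisymm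
        (heq.le.trans (le_inf (inf_le_left.trans inf_le_right) inf_le_right)) h))
  -- 2-irreducible → strongly 2-irreducible
  have distrib : ∀ A B : Submodule R M, (N ⊔ A) ⊓ (N ⊔ B) ≤ N ⊔ (A ⊓ B) := by
    intro A B
    obtain ⟨In, hn⟩ := hmul N
    obtain ⟨Ia, ha⟩ := hmul A
    have hsum : N ⊔ A = (In ⊔ Ia) • ⊤ := by rw [Submodule.sup_smul, ← hn, ← ha]
    have key : (N ⊔ A) ⊓ (N ⊔ B) = (In ⊔ Ia) • (N ⊔ B) := by
      rw [hsum, ← hpure]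
    rw [key, Submodule.sup_smul]
    apply sup_le
    · refine le_sup_of_le_left ?_
      calc In • (N ⊔ B) ≤ In • ⊤ := smul_mono_right _ le_top
        _ = N := hn.symm
    · rw [Submodule.smul_sup]
      apply sup_le
      · exact le_sup_of_le_left Submodule.smul_le_right
      · refine le_sup_of_le_right ?_
        have : Ia • B = A ⊓ B := by rw [hpure, ← ha]
        exact this.le
  have h_2irr_s2i : Is2Irreducible N → IsStrongly2Irreducible N := by
    intro h2
    refine ⟨hN, ?_⟩
    intro H₁ H₂ H₃ hle
    have hNeq : N = (N ⊔ H₁) ⊓ (N ⊔ H₂) ⊓ (N ⊔ H₃) := by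
      apply le_antisymm
      · exact le_inf (le_inf le_sup_left le_sup_left) le_sup_left
      · calc (N ⊔ H₁) ⊓ (N ⊔ H₂) ⊓ (N ⊔ H₃)
            ≤ (N ⊔ (H₁ ⊓ H₂)) ⊓ (N ⊔ H₃) := inf_le_inf_right _ (distrib H₁ H₂)
          _ ≤ N ⊔ (H₁ ⊓ H₂ ⊓ H₃) := distrib _ _
          _ ≤ N := sup_le le_rfl hle
    rcases h2 _ _ _ hNeq with h | h | h
    · exact Or.inl ((inf_le_inf le_sup_right le_sup_right).trans h.ge)
    · exact Or.inr (Or.inl ((inf_le_inf le_sup_right le_sup_right).trans h.ge))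
    · exact Or.inr (Or.inr ((inf_le_inf le_sup_right le_sup_right).trans h.ge))
  exact ⟨⟨h_s2i_2abs, h_2abs_s2i⟩, ⟨h_s2i_2irr, h_2irr_s2i⟩⟩
end

section
/- Let R be a commutative ring with identity, M an R-module, S a multiplicatively closed subset of R, and N a finitely generated submodule of M that is both a prime submodule and a strongly 2-irreducible submodule of M, with (N :_R M) ∩ S = ∅. If the localization S⁻¹N is a proper submodule of S⁻¹M, then S⁻¹N is a strongly 2-irreducible submodule of the S⁻¹R-module S⁻¹M. -/
open Submodule

section Localization

variable {R M : Type*} (A : Type*) {M' : Type*} [CommRing R] [AddCommGroup M] [Module R M]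
  [CommRing A] [Algebra R A] [AddCommGroup M'] [Module R M'] [Module A M'] [IsScalarTower R A M']
  (p : Submonoid R) [IsLocalization p A] (f : M →ₗ[R] M') [IsLocalizedModule p f]

theorem Submodule.comap_localized'_eq_of_isPrimeSubmodule {N : Submodule R M}
    (hN : IsPrimeSubmodule N) (hdisj : Disjoint (p : Set R) (N.colon ⊤)) :
    ((N.localized' A p f).restrictScalars R).comap f = N := by
  refine le_antisymm (fun x hx => ?_) ((localized'gi A p f).gc.le_u_l N)
  obtain ⟨n, hn, s, hns⟩ := hx
  rw [← IsLocalizedModule.mk'_one p f x, IsLocalizedModule.mk'_eq_mk'_iff] at hns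
  obtain ⟨u, hu⟩ := hns
  have hux : ((u * s : p) : R) • x ∈ N := by
    simp only [Submonoid.smul_def, one_smul] at hu
    rw [Submonoid.coe_mul, mul_smul, hu]
    exact N.smul_mem _ hn
  exact (hN.2 _ x hux).resolve_right fun hcolon =>
    Set.disjoint_left.mp hdisj (u * s).2 hcolon

theorem IsStrongly2Irreducible.localized' {N : Submodule R M} (hN : IsStrongly2Irreducible N)
    (hcomap : ((N.localized' A p f).restrictScalars R).comap f = N) :
    IsStrongly2Irreducible (N.localized' A p f) := by
  set gi := localized'gi A p f
  have hproper : N.localized' A p f ≠ ⊤ := fun htop => hN.1 <| by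
    rw [← hcomap, htop, restrictScalars_top, comap_top]
  refine ⟨hproper, fun H₁ H₂ H₃ hle => ?_⟩
  have hpair (H H' : Submodule A M')
      (h : comap f (H.restrictScalars R) ⊓ comap f (H'.restrictScalars R) ≤ N) :
      H ⊓ H' ≤ N.localized' A p f := by
    rw [← gi.l_u_eq H, ← gi.l_u_eq H', ← localized'_inf]
    exact gi.gc.monotone_l h
  have htriple : comap f (H₁.restrictScalars R) ⊓ comap f (H₂.restrictScalars R) ⊓
      comap f (H₃.restrictScalars R) ≤ N := by
    rw [← gi.gc.u_inf, ← gi.gc.u_inf]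
    exact (gi.gc.monotone_u hle).trans hcomap.le
  rcases hN.2 _ _ _ htriple with h | h | h
  exacts [.inl (hpair _ _ h), .inr (.inl (hpair _ _ h)), .inr (.inr (hpair _ _ h))]

end Localization

theorem stmt_14_general {R M : Type*} [CommRing R] [AddCommGroup M] [Module R M]
    (S : Submonoid R) (N : Submodule R M)
    (hprime : IsPrimeSubmodule N) (hs2 : IsStrongly2Irreducible N)
    (hdisj : (S : Set R) ∩ ((N.colon ⊤ : Ideal R) : Set R) = ∅) :
    IsStrongly2Irreducible (N.localized S) :=
  hs2.localized' _ _ _ <| comap_localized'_eq_of_isPrimeSubmodule _ _ _ hprime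
    (Set.disjoint_iff_inter_eq_empty.mpr hdisj)

theorem stmt_14 {R M : Type*} [CommRing R] [AddCommGroup M] [Module R M]
    (S : Submonoid R) (N : Submodule R M) (hfg : N.FG)
    (hprime : IsPrimeSubmodule N) (hs2 : IsStrongly2Irreducible N)
    (hdisj : (S : Set R) ∩ ((N.colon ⊤ : Ideal R) : Set R) = ∅)
    (hproper : N.localized S ≠ ⊤) :
    IsStrongly2Irreducible (N.localized S) :=
  stmt_14_general S N hprime hs2 hdisj
end

section
/- Let R be a commutative ring with identity, M an R-module, and {K_i}_{i ∈ I} a nonempty chain (totally ordered by inclusion) of strongly 2-irreducible submodules of M. Then ⋂_{i ∈ I} K_i is a strongly 2-irreducible submodule of M. -/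
/-! If the intersection of a downward directed family failed the condition, each of the three
pairwise intersections would escape some member; a member below those three witnesses then
contradicts its own strong 2-irreducibility. -/

theorem Directed.exists_le_three {α ι : Type*} [Preorder α] {f : ι → α}
    (hf : Directed (· ≥ ·) f) (i₁ i₂ i₃ : ι) :
    ∃ k, f k ≤ f i₁ ∧ f k ≤ f i₂ ∧ f k ≤ f i₃ := by
  obtain ⟨j, hj₁, hj₂⟩ := hf i₁ i₂
  obtain ⟨k, hkj, hk₃⟩ := hf j i₃
  exact ⟨k, hkj.trans hj₁, hkj.trans hj₂, hk₃⟩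

theorem directed_ge_of_total {α ι : Type*} [Preorder α] {f : ι → α}
    (hf : ∀ i j, f i ≤ f j ∨ f j ≤ f i) : Directed (· ≥ ·) f := fun i j =>
  (hf i j).elim (fun hij => ⟨i, le_rfl, hij⟩) fun hji => ⟨j, hji, le_rfl⟩

theorem isStrongly2Irreducible_iInf_of_directed {R M ι : Type*} [CommRing R] [AddCommGroup M]
    [Module R M] [Nonempty ι] {K : ι → Submodule R M}
    (hK : Directed (· ≥ ·) K)
    (h : ∀ i, IsStrongly2Irreducible (K i)) : IsStrongly2Irreducible (⨅ i, K i) := by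
  refine ⟨fun htop => ?_, fun H₁ H₂ H₃ hH => ?_⟩
  · obtain ⟨i⟩ := ‹Nonempty ι›
    exact (h i).1 (top_le_iff.mp (htop ▸ iInf_le K i))
  · by_contra! hcon
    obtain ⟨h₁₂, h₁₃, h₂₃⟩ := hcon
    simp only [le_iInf_iff, not_forall] at h₁₂ h₁₃ h₂₃
    obtain ⟨i₁, h₁⟩ := h₁₂
    obtain ⟨i₂, h₂⟩ := h₁₃
    obtain ⟨i₃, h₃⟩ := h₂₃
    obtain ⟨k, hk₁, hk₂, hk₃⟩ := hK.exists_le_three i₁ i₂ i₃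
    rcases (h k).2 H₁ H₂ H₃ (hH.trans (iInf_le K k)) with hd | hd | hd
    · exact h₁ (hd.trans hk₁)
    · exact h₂ (hd.trans hk₂)
    · exact h₃ (hd.trans hk₃)

theorem stmt_15 {R M ι : Type*} [CommRing R] [AddCommGroup M] [Module R M]
    [Nonempty ι] (K : ι → Submodule R M)
    (hchain : ∀ i j, K i ≤ K j ∨ K j ≤ K i)
    (h : ∀ i, IsStrongly2Irreducible (K i)) :
    IsStrongly2Irreducible (⨅ i, K i) :=
  isStrongly2Irreducible_iInf_of_directed (directed_ge_of_total hchain) h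
end

section
/- Let R be a commutative ring with identity, M and M' R-modules, and f : M → M' a surjective R-module homomorphism. If N is a strongly 2-irreducible submodule of M with ker(f) ⊆ N, then f(N) is a strongly 2-irreducible submodule of M'. -/
/-! Pulling back along a surjection `f` is an order embedding of submodule lattices that
preserves `⊓` and `⊤`, so the defining condition for `P` is the one for `P.comap f`, tested on
pulled-back submodules only. Since `ker f ≤ N` gives `(N.map f).comap f = N`, the theorem
follows. -/

theorem IsStrongly2Irreducible.of_comap {R M M' : Type*} [CommRing R] [AddCommGroup M]
    [AddCommGroup M'] [Module R M] [Module R M'] {f : M →ₗ[R] M'}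
    (hf : Function.Surjective f) {P : Submodule R M'}
    (hP : IsStrongly2Irreducible (P.comap f)) : IsStrongly2Irreducible P := by
  obtain ⟨hP_ne_top, hP_inf⟩ := hP
  have comap_le_iff : ∀ H : Submodule R M', H.comap f ≤ P.comap f ↔ H ≤ P :=
    fun _ => Submodule.comap_le_comap_iff_of_surjective hf
  refine ⟨fun hP_top => hP_ne_top (by rw [hP_top, Submodule.comap_top]), ?_⟩
  intro H₁ H₂ H₃ hle
  simp only [← comap_le_iff, Submodule.comap_inf] at hle ⊢
  exact hP_inf _ _ _ hle

theorem stmt_16 {R M M' : Type*} [CommRing R] [AddCommGroup M] [AddCommGroup M']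
    [Module R M] [Module R M'] (f : M →ₗ[R] M') (hf : Function.Surjective f)
    (N : Submodule R M) (hN : IsStrongly2Irreducible N)
    (hker : LinearMap.ker f ≤ N) :
    IsStrongly2Irreducible (N.map f) := by
  refine IsStrongly2Irreducible.of_comap hf ?_
  rwa [Submodule.comap_map_eq_self hker]
end

section
/- Let R₁ and R₂ be commutative rings with identity, R = R₁ × R₂, M₁ an R₁-module, M₂ an R₂-module, and M = M₁ × M₂ the corresponding R-module. Let N = N₁ × N₂ be a proper submodule of M, where N₁ is a submodule of M₁ and N₂ is a submodule of M₂. Then N is a strongly 2-irreducible submodule of M if and only if either (N₁ = M₁ and N₂ is a strongly 2-irreducible submodule of M₂), or (N₂ = M₂ and N₁ is a strongly 2-irreducible submodule of M₁), or (N₁ is a strongly irreducible submodule of M₁ and N₂ is a strongly irreducible submodule of M₂). -/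
section Prod

variable {R₁ R₂ M₁ M₂ : Type*} [CommRing R₁] [CommRing R₂]
  [AddCommGroup M₁] [AddCommGroup M₂] [Module R₁ M₁] [Module R₂ M₂]

/-- Componentwise scalar multiplication of the product ring `R₁ × R₂` on `M₁ × M₂`. -/
instance prodRingSMul : SMul (R₁ × R₂) (M₁ × M₂) :=
  ⟨fun r m => (r.1 • m.1, r.2 • m.2)⟩

instance prodRingModule : Module (R₁ × R₂) (M₁ × M₂) where
  one_smul m := Prod.ext (one_smul _ _) (one_smul _ _)
  mul_smul r s m := Prod.ext (mul_smul _ _ _) (mul_smul _ _ _)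
  smul_zero r := Prod.ext (smul_zero _) (smul_zero _)
  smul_add r m n := Prod.ext (smul_add _ _ _) (smul_add _ _ _)
  add_smul r s m := Prod.ext (add_smul _ _ _) (add_smul _ _ _)
  zero_smul m := Prod.ext (zero_smul _ _) (zero_smul _ _)

/-- The product `N₁ × N₂` of submodules, as a submodule of the `(R₁ × R₂)`-module
`M₁ × M₂`. -/
def prodSubmodule (N₁ : Submodule R₁ M₁) (N₂ : Submodule R₂ M₂) :
    Submodule (R₁ × R₂) (M₁ × M₂) where
  carrier := (N₁ : Set M₁) ×ˢ (N₂ : Set M₂)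
  add_mem' ha hb := ⟨N₁.add_mem ha.1 hb.1, N₂.add_mem ha.2 hb.2⟩
  zero_mem' := ⟨N₁.zero_mem, N₂.zero_mem⟩
  smul_mem' r x hx := ⟨N₁.smul_mem r.1 hx.1, N₂.smul_mem r.2 hx.2⟩

lemma prod_smul_def (r : R₁ × R₂) (m : M₁ × M₂) :
    r • m = (r.1 • m.1, r.2 • m.2) := rfl

lemma mem_prodSubmodule {N₁ : Submodule R₁ M₁} {N₂ : Submodule R₂ M₂} {x : M₁ × M₂} :
    x ∈ prodSubmodule N₁ N₂ ↔ x.1 ∈ N₁ ∧ x.2 ∈ N₂ := Iff.rfl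

lemma prodSubmodule_le {A C : Submodule R₁ M₁} {B D : Submodule R₂ M₂} :
    prodSubmodule A B ≤ prodSubmodule C D ↔ A ≤ C ∧ B ≤ D := by
  constructor
  · intro h
    exact ⟨fun a ha => (h (x := (a, 0)) ⟨ha, B.zero_mem⟩).1,
      fun b hb => (h (x := (0, b)) ⟨A.zero_mem, hb⟩).2⟩
  · rintro ⟨h1, h2⟩ x hx
    exact ⟨h1 hx.1, h2 hx.2⟩

lemma prodSubmodule_inf (A C : Submodule R₁ M₁) (B D : Submodule R₂ M₂) :
    prodSubmodule A B ⊓ prodSubmodule C D = prodSubmodule (A ⊓ C) (B ⊓ D) := by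
  ext x
  simp only [Submodule.mem_inf, mem_prodSubmodule]
  tauto

lemma prodSubmodule_eq_top {A : Submodule R₁ M₁} {B : Submodule R₂ M₂} :
    prodSubmodule A B = ⊤ ↔ A = ⊤ ∧ B = ⊤ := by
  constructor
  · intro h
    constructor
    · ext a; simp only [Submodule.mem_top, iff_true]
      exact (mem_prodSubmodule.mp (h ▸ Submodule.mem_top : (a, (0:M₂)) ∈ prodSubmodule A B)).1
    · ext b; simp only [Submodule.mem_top, iff_true]
      exact (mem_prodSubmodule.mp (h ▸ Submodule.mem_top : ((0:M₁), b) ∈ prodSubmodule A B)).2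
  · rintro ⟨rfl, rfl⟩
    ext x
    simp [mem_prodSubmodule]

lemma exists_prod_eq (H : Submodule (R₁ × R₂) (M₁ × M₂)) :
    ∃ (A : Submodule R₁ M₁) (B : Submodule R₂ M₂), H = prodSubmodule A B := by
  refine ⟨{ carrier := {a | (a, 0) ∈ H}
            add_mem' := fun {a b} ha hb => by
              simpa using H.add_mem ha hb
            zero_mem' := H.zero_mem
            smul_mem' := fun r a ha => by
              have := H.smul_mem (r, (0:R₂)) ha
              simpa [prod_smul_def] using this },
         { carrier := {b | (0, b) ∈ H}
           add_mem' := fun {a b} ha hb => by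
             simpa using H.add_mem ha hb
           zero_mem' := H.zero_mem
           smul_mem' := fun r b hb => by
             have := H.smul_mem ((0:R₁), r) hb
             simpa [prod_smul_def] using this }, ?_⟩
  ext x
  simp only [mem_prodSubmodule, Submodule.mem_mk, AddSubmonoid.mem_mk,
    AddSubsemigroup.mem_mk, Set.mem_setOf_eq]
  constructor
  · intro hx
    constructor
    · have := H.smul_mem ((1:R₁), (0:R₂)) hx
      simpa [prod_smul_def] using this
    · have := H.smul_mem ((0:R₁), (1:R₂)) hx
      simpa [prod_smul_def] using this
  · rintro ⟨h1, h2⟩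
    have := H.add_mem h1 h2
    simpa using this

lemma si_triple {R M : Type*} [CommRing R] [AddCommGroup M] [Module R M]
    {N A B C : Submodule R M} (hN : ∀ H₁ H₂ : Submodule R M, H₁ ⊓ H₂ ≤ N → H₁ ≤ N ∨ H₂ ≤ N)
    (h : A ⊓ B ⊓ C ≤ N) :
    (A ⊓ B ≤ N ∧ A ⊓ C ≤ N) ∨ (A ⊓ B ≤ N ∧ B ⊓ C ≤ N) ∨ (A ⊓ C ≤ N ∧ B ⊓ C ≤ N) := by
  rcases hN (A ⊓ B) C h with h1 | h1
  · rcases hN (A ⊓ C) B (by rw [inf_right_comm]; exact h) with h2 | h2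
    · exact Or.inl ⟨h1, h2⟩
    · exact Or.inr (Or.inl ⟨h1, le_trans inf_le_left h2⟩)
  · exact Or.inr (Or.inr ⟨le_trans inf_le_right h1, le_trans inf_le_right h1⟩)

theorem stmt_19 (N₁ : Submodule R₁ M₁) (N₂ : Submodule R₂ M₂)
    (hN : prodSubmodule N₁ N₂ ≠ ⊤) :
    IsStrongly2Irreducible (prodSubmodule N₁ N₂) ↔
      (N₁ = ⊤ ∧ IsStrongly2Irreducible N₂) ∨
      (N₂ = ⊤ ∧ IsStrongly2Irreducible N₁) ∨
      (IsStronglyIrreducible N₁ ∧ IsStronglyIrreducible N₂) := by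
  have hnot : ¬ (N₁ = ⊤ ∧ N₂ = ⊤) := fun h => hN (prodSubmodule_eq_top.mpr h)
  constructor
  · rintro ⟨-, h⟩
    by_cases h1 : N₁ = ⊤
    · -- N₂ ≠ ⊤
      have h2 : N₂ ≠ ⊤ := fun h2 => hnot ⟨h1, h2⟩
      refine Or.inl ⟨h1, h2, fun B₁ B₂ B₃ hB => ?_⟩
      have := h (prodSubmodule ⊤ B₁) (prodSubmodule ⊤ B₂) (prodSubmodule ⊤ B₃) (by
        rw [prodSubmodule_inf, prodSubmodule_inf, prodSubmodule_le]
        exact ⟨by rw [h1]; exact le_top, hB⟩)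
      simpa only [prodSubmodule_inf, prodSubmodule_le, h1, top_inf_eq, le_top, true_and]
        using this
    · by_cases h2 : N₂ = ⊤
      · refine Or.inr (Or.inl ⟨h2, h1, fun A₁ A₂ A₃ hA => ?_⟩)
        have := h (prodSubmodule A₁ ⊤) (prodSubmodule A₂ ⊤) (prodSubmodule A₃ ⊤) (by
          rw [prodSubmodule_inf, prodSubmodule_inf, prodSubmodule_le]
          exact ⟨hA, by rw [h2]; exact le_top⟩)
        simpa only [prodSubmodule_inf, prodSubmodule_le, h2, top_inf_eq, le_top, and_true]
          using this
      · refine Or.inr (Or.inr ⟨⟨h1, fun A B hAB => ?_⟩, ⟨h2, fun A B hAB => ?_⟩⟩)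
        · have := h (prodSubmodule A ⊤) (prodSubmodule B ⊤) (prodSubmodule ⊤ N₂) (by
            rw [prodSubmodule_inf, prodSubmodule_inf, prodSubmodule_le]
            constructor
            · simpa using hAB
            · simp)
          rw [prodSubmodule_inf, prodSubmodule_inf, prodSubmodule_inf,
            prodSubmodule_le, prodSubmodule_le, prodSubmodule_le] at this
          rcases this with ⟨-, htop⟩ | ⟨hA, -⟩ | ⟨hB, -⟩
          · exact absurd (top_le_iff.mp (by simpa using htop)) h2
          · exact Or.inl (by simpa using hA)
          · exact Or.inr (by simpa using hB)
        · have := h (prodSubmodule ⊤ A) (prodSubmodule ⊤ B) (prodSubmodule N₁ ⊤) (by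
            rw [prodSubmodule_inf, prodSubmodule_inf, prodSubmodule_le]
            constructor
            · simp
            · simpa using hAB)
          rw [prodSubmodule_inf, prodSubmodule_inf, prodSubmodule_inf,
            prodSubmodule_le, prodSubmodule_le, prodSubmodule_le] at this
          rcases this with ⟨htop, -⟩ | ⟨-, hA⟩ | ⟨-, hB⟩
          · exact absurd (top_le_iff.mp (by simpa using htop)) h1
          · exact Or.inl (by simpa using hA)
          · exact Or.inr (by simpa using hB)
  · intro hcase
    refine ⟨hN, fun H₁ H₂ H₃ hle => ?_⟩
    obtain ⟨A₁, B₁, rfl⟩ := exists_prod_eq H₁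
    obtain ⟨A₂, B₂, rfl⟩ := exists_prod_eq H₂
    obtain ⟨A₃, B₃, rfl⟩ := exists_prod_eq H₃
    rw [prodSubmodule_inf, prodSubmodule_inf, prodSubmodule_le] at hle
    obtain ⟨hA, hB⟩ := hle
    simp only [prodSubmodule_inf, prodSubmodule_le]
    rcases hcase with ⟨h1, -, h2⟩ | ⟨h2, -, h1⟩ | ⟨⟨-, hs1⟩, ⟨-, hs2⟩⟩
    · have hAtop : ∀ A : Submodule R₁ M₁, A ≤ N₁ := fun A => h1 ▸ le_top
      rcases h2 B₁ B₂ B₃ hB with hb | hb | hb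
      · exact Or.inl ⟨hAtop _, hb⟩
      · exact Or.inr (Or.inl ⟨hAtop _, hb⟩)
      · exact Or.inr (Or.inr ⟨hAtop _, hb⟩)
    · have hBtop : ∀ B : Submodule R₂ M₂, B ≤ N₂ := fun B => h2 ▸ le_top
      rcases h1 A₁ A₂ A₃ hA with ha | ha | ha
      · exact Or.inl ⟨ha, hBtop _⟩
      · exact Or.inr (Or.inl ⟨ha, hBtop _⟩)
      · exact Or.inr (Or.inr ⟨ha, hBtop _⟩)
    · rcases si_triple hs1 hA with ⟨p, q⟩ | ⟨p, q⟩ | ⟨p, q⟩ <;>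
        rcases si_triple hs2 hB with ⟨u, v⟩ | ⟨u, v⟩ | ⟨u, v⟩ <;> tauto


end Prod
end
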